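/- arXiv:1309.4710 — 5 statements merged into one kernel-verified Lean document; each statement's English description precedes it below -/
import Mathlib

section
/- Let n ∈ ℕ and let Pₙ be the representation of the Kronecker quiver given by the two maps kⁿ → kⁿ⁺¹ with matrices (Iₙ; 0) and (0; Iₙ) (identity stacked above/below a zero row). Then Pₙ is an indecomposable representation. -/
open Matrix Finset

/-- A finite-dimensional representation of the Kronecker quiver over `k`:
two vector spaces `k^{d1}`, `k^{d2}` and two linear maps `k^{d2} → k^{d1}`
given by the matrices `A` and `B`. -/
structure KRep (k : Type) [Field k] where
  d1 : ℕ
  d2 : ℕ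
  A : Matrix (Fin d1) (Fin d2) k
  B : Matrix (Fin d1) (Fin d2) k

/-- A morphism of Kronecker representations `M → N`. -/
structure KHom {k : Type} [Field k] (M N : KRep k) where
  f1 : Matrix (Fin N.d1) (Fin M.d1) k
  f2 : Matrix (Fin N.d2) (Fin M.d2) k
  comm_a : f1 * M.A = N.A * f2
  comm_b : f1 * M.B = N.B * f2

variable {k : Type} [Field k]

/-- A monomorphism: both components injective. -/
def KHom.Mono {M N : KRep k} (f : KHom M N) : Prop :=
  Function.Injective f.f1.mulVecLin ∧ Function.Injective f.f2.mulVecLin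

/-- An epimorphism: both components surjective. -/
def KHom.Epi {M N : KRep k} (f : KHom M N) : Prop :=
  Function.Surjective f.f1.mulVecLin ∧ Function.Surjective f.f2.mulVecLin

/-- Isomorphism of Kronecker representations. -/
def KIso (M N : KRep k) : Prop :=
  ∃ f : KHom M N, Function.Bijective f.f1.mulVecLin ∧ Function.Bijective f.f2.mulVecLin

/-- `SES N Y M` : there is a short exact sequence `0 → N → Y → M → 0`. -/
def SES (N Y M : KRep k) : Prop :=
  ∃ (f : KHom N Y) (g : KHom Y M), f.Mono ∧ g.Epi ∧
    LinearMap.range f.f1.mulVecLin = LinearMap.ker g.f1.mulVecLin ∧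
    LinearMap.range f.f2.mulVecLin = LinearMap.ker g.f2.mulVecLin

/-- The zero representation. -/
def KRep.zero : KRep k := ⟨0, 0, 0, 0⟩

/-- Direct sum of two Kronecker representations (block diagonal matrices). -/
def KRep.dsum (M N : KRep k) : KRep k where
  d1 := M.d1 + N.d1
  d2 := M.d2 + N.d2
  A := Matrix.reindex finSumFinEquiv finSumFinEquiv (Matrix.fromBlocks M.A 0 0 N.A)
  B := Matrix.reindex finSumFinEquiv finSumFinEquiv (Matrix.fromBlocks M.B 0 0 N.B)

/-- Direct sum of a list of Kronecker representations. -/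
def KRep.dsumList (l : List (KRep k)) : KRep k := l.foldr KRep.dsum KRep.zero

/-- The preprojective indecomposable `P n`, with maps `k^n → k^{n+1}`
given by the matrices `(I_n ; 0)` and `(0 ; I_n)`. -/
def KRep.P (k : Type) [Field k] (n : ℕ) : KRep k where
  d1 := n + 1
  d2 := n
  A := Matrix.of fun i j => if (i : ℕ) = (j : ℕ) then 1 else 0
  B := Matrix.of fun i j => if (i : ℕ) = (j : ℕ) + 1 then 1 else 0

/-- The preinjective indecomposable `I n`, with maps `k^{n+1} → k^n`
given by the matrices `(I_n  0)` and `(0  I_n)`. -/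
def KRep.Inj (k : Type) [Field k] (n : ℕ) : KRep k where
  d1 := n
  d2 := n + 1
  A := Matrix.of fun i j => if (i : ℕ) = (j : ℕ) then 1 else 0
  B := Matrix.of fun i j => if (i : ℕ) + 1 = (j : ℕ) then 1 else 0

/-- `M` is indecomposable: nonzero, and any decomposition as a direct sum
of two subrepresentations has a zero summand. -/
def KRep.Indecomposable (M : KRep k) : Prop :=
  0 < M.d1 + M.d2 ∧
    ∀ N₁ N₂ : KRep k, KIso M (N₁.dsum N₂) → N₁.d1 + N₁.d2 = 0 ∨ N₂.d1 + N₂.d2 = 0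

/-- The preinjective representation `a 0 · I₀ ⊕ a 1 · I₁ ⊕ ⋯ ⊕ a n · Iₙ`. -/
def KRep.multi (k : Type) [Field k] (a : ℕ → ℕ) (n : ℕ) : KRep k :=
  KRep.dsumList (((List.range (n + 1)).flatMap fun i => List.replicate (a i) (KRep.Inj k i)))

/-- `M'` is a subfactor of `M`: there is a linking module `L` with
`M' ↪ L ↞ M`. -/
def IsSubfactor (M' M : KRep k) : Prop :=
  ∃ L : KRep k, (∃ f : KHom M' L, f.Mono) ∧ (∃ g : KHom M L, g.Epi)

-- auxiliary definitions and lemmas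
def PindPA (k : Type) [Field k] (n : ℕ) : Matrix (Fin (n+1)) (Fin n) k :=
  Matrix.of fun i j => if (i : ℕ) = (j : ℕ) then 1 else 0

def PindPB (k : Type) [Field k] (n : ℕ) : Matrix (Fin (n+1)) (Fin n) k :=
  Matrix.of fun i j => if (i : ℕ) = (j : ℕ) + 1 then 1 else 0

lemma Pind_relA {n : ℕ} {e1 : Matrix (Fin (n+1)) (Fin (n+1)) k} {e2 : Matrix (Fin n) (Fin n) k}
    (hA : e1 * PindPA k n = PindPA k n * e2) (i : Fin (n+1)) (j : Fin n) :
    e1 i j.castSucc = if h : (i : ℕ) < n then e2 ⟨i, h⟩ j else 0 := by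
  have h := congrFun (congrFun hA i) j
  rw [Matrix.mul_apply, Matrix.mul_apply] at h
  have hl : ∀ l : Fin (n+1), e1 i l * PindPA k n l j = if l = j.castSucc then e1 i l else 0 := by
    intro l
    simp only [PindPA, Matrix.of_apply]
    by_cases hlj : l = j.castSucc
    · subst hlj; simp
    · rw [if_neg, if_neg hlj, mul_zero]
      intro hv; exact hlj (Fin.ext (by simpa using hv))
  rw [Finset.sum_congr rfl fun l _ => hl l, Finset.sum_ite_eq' _ _ _, if_pos (Finset.mem_univ _)] at h
  rw [h]
  by_cases hi : (i : ℕ) < n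
  · rw [dif_pos hi]
    have hr : ∀ l : Fin n, PindPA k n i l * e2 l j = if l = (⟨i, hi⟩ : Fin n) then e2 l j else 0 := by
      intro l
      simp only [PindPA, Matrix.of_apply]
      by_cases hli : l = ⟨i, hi⟩
      · subst hli; simp
      · rw [if_neg, if_neg hli, zero_mul]
        intro hv; exact hli (Fin.ext (by simpa using hv.symm))
    rw [Finset.sum_congr rfl fun l _ => hr l, Finset.sum_ite_eq' _ _ _, if_pos (Finset.mem_univ _)]
  · rw [dif_neg hi]
    apply Finset.sum_eq_zero
    intro l _
    simp only [PindPA, Matrix.of_apply]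
    rw [if_neg, zero_mul]
    omega

lemma Pind_relB {n : ℕ} {e1 : Matrix (Fin (n+1)) (Fin (n+1)) k} {e2 : Matrix (Fin n) (Fin n) k}
    (hB : e1 * PindPB k n = PindPB k n * e2) (i : Fin (n+1)) (j : Fin n) :
    e1 i j.succ = if h : 0 < (i : ℕ) then e2 ⟨(i : ℕ) - 1, by omega⟩ j else 0 := by
  have h := congrFun (congrFun hB i) j
  rw [Matrix.mul_apply, Matrix.mul_apply] at h
  have hl : ∀ l : Fin (n+1), e1 i l * PindPB k n l j = if l = j.succ then e1 i l else 0 := by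
    intro l
    simp only [PindPB, Matrix.of_apply]
    by_cases hlj : l = j.succ
    · subst hlj; simp
    · rw [if_neg, if_neg hlj, mul_zero]
      intro hv; exact hlj (Fin.ext (by simpa using hv))
  rw [Finset.sum_congr rfl fun l _ => hl l, Finset.sum_ite_eq' _ _ _, if_pos (Finset.mem_univ _)] at h
  rw [h]
  by_cases hi : 0 < (i : ℕ)
  · rw [dif_pos hi]
    have hin : (i : ℕ) - 1 < n := by omega
    have hr : ∀ l : Fin n, PindPB k n i l * e2 l j = if l = (⟨(i:ℕ)-1, hin⟩ : Fin n) then e2 l j else 0 := by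
      intro l
      simp only [PindPB, Matrix.of_apply]
      by_cases hli : l = ⟨(i:ℕ)-1, hin⟩
      · subst hli; rw [if_pos (by simp; omega), one_mul, if_pos rfl]
      · rw [if_neg, if_neg hli, zero_mul]
        intro hv; exact hli (Fin.ext (by simp at hv ⊢; omega))
    rw [Finset.sum_congr rfl fun l _ => hr l, Finset.sum_ite_eq' _ _ _, if_pos (Finset.mem_univ _)]
  · rw [dif_neg hi]
    apply Finset.sum_eq_zero
    intro l _
    simp only [PindPB, Matrix.of_apply]
    rw [if_neg, zero_mul]
    omega

lemma Pind_scalar {n : ℕ} {e1 : Matrix (Fin (n+1)) (Fin (n+1)) k} {e2 : Matrix (Fin n) (Fin n) k}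
    (hA0 : e1 * PindPA k n = PindPA k n * e2)
    (hB0 : e1 * PindPB k n = PindPB k n * e2) :
    e1 = e1 0 0 • 1 ∧ e2 = e1 0 0 • 1 := by
  have hA := Pind_relA hA0
  have hB := Pind_relB hB0
  set c := e1 0 0 with hc
  have shift : ∀ i j : Fin n, e1 i.succ j.succ = e1 i.castSucc j.castSucc := by
    intro i j
    rw [hB i.succ j, hA i.castSucc j]
    rw [dif_pos (by simp), dif_pos (by simp [i.isLt])]
    congr 1
  have row0 : ∀ j : Fin n, e1 0 j.succ = 0 := fun j => by
    rw [hB 0 j, dif_neg (by simp)]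
  have rown : ∀ j : Fin n, e1 (Fin.last n) j.castSucc = 0 := fun j => by
    rw [hA (Fin.last n) j, dif_neg (by simp)]
  have lt_zero : ∀ m : ℕ, ∀ i j : Fin (n+1), (i : ℕ) = m → (i : ℕ) < (j : ℕ) → e1 i j = 0 := by
    intro m
    induction m with
    | zero =>
      intro i j hi hij
      have hi0 : i = 0 := Fin.ext (by simpa using hi)
      have hj : (j : ℕ) - 1 < n := by omega
      have hjs : j = (⟨(j:ℕ)-1, hj⟩ : Fin n).succ := Fin.ext (by simp; omega)
      rw [hi0, hjs]; exact row0 _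
    | succ m ih =>
      intro i j hi hij
      have hi' : m < n := by omega
      have hj' : (j : ℕ) - 1 < n := by omega
      have hie : i = (⟨m, hi'⟩ : Fin n).succ := Fin.ext (by simp; omega)
      have hje : j = (⟨(j:ℕ)-1, hj'⟩ : Fin n).succ := Fin.ext (by simp; omega)
      rw [hie, hje, shift]
      exact ih _ _ (by simp) (by simp; omega)
  have gt_zero : ∀ m : ℕ, ∀ i j : Fin (n+1), n - (i : ℕ) = m → (j : ℕ) < (i : ℕ) → e1 i j = 0 := by
    intro m
    induction m with
    | zero =>
      intro i j hi hij
      have hin : (i : ℕ) = n := by omega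
      have hj : (j : ℕ) < n := by omega
      have hie : i = Fin.last n := Fin.ext (by simpa using hin)
      have hje : j = (⟨(j:ℕ), hj⟩ : Fin n).castSucc := Fin.ext (by simp)
      rw [hie, hje]; exact rown _
    | succ m ih =>
      intro i j hi hij
      have hi' : (i : ℕ) < n := by omega
      have hj' : (j : ℕ) < n := by omega
      have hie : i = (⟨(i:ℕ), hi'⟩ : Fin n).castSucc := Fin.ext (by simp)
      have hje : j = (⟨(j:ℕ), hj'⟩ : Fin n).castSucc := Fin.ext (by simp)
      rw [hie, hje, ← shift]
      exact ih _ _ (by simp; omega) (by simp; omega)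
  have diag : ∀ m : ℕ, ∀ i j : Fin (n+1), (i : ℕ) = m → (i : ℕ) = (j : ℕ) → e1 i j = c := by
    intro m
    induction m with
    | zero =>
      intro i j hi hij
      have : i = 0 := Fin.ext (by simpa using hi)
      have : j = 0 := Fin.ext (by simp; omega)
      subst this; subst ‹i = 0›; rfl
    | succ m ih =>
      intro i j hi hij
      have hi' : m < n := by omega
      have hie : i = (⟨m, hi'⟩ : Fin n).succ := Fin.ext (by simp; omega)
      have hje : j = (⟨m, hi'⟩ : Fin n).succ := Fin.ext (by simp; omega)
      rw [hie, hje, shift]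
      exact ih _ _ (by simp) (by simp)
  have he1 : e1 = c • 1 := by
    ext i j
    rw [Matrix.smul_apply, Matrix.one_apply]
    by_cases hij : i = j
    · rw [if_pos hij, smul_eq_mul, mul_one]
      exact diag (i : ℕ) i j rfl (by rw [hij])
    · rw [if_neg hij, smul_eq_mul, mul_zero]
      rcases Nat.lt_trichotomy (i : ℕ) (j : ℕ) with h | h | h
      · exact lt_zero _ i j rfl h
      · exact absurd (Fin.ext h) hij
      · exact gt_zero _ i j rfl h
  refine ⟨he1, ?_⟩
  ext i j
  have := hA i.castSucc j
  rw [dif_pos (by simp [i.isLt])] at this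
  have hii : (⟨((i.castSucc : Fin (n+1)) : ℕ), by simp [i.isLt]⟩ : Fin n) = i := Fin.ext (by simp)
  rw [hii] at this
  rw [← this, he1, Matrix.smul_apply, Matrix.smul_apply, Matrix.one_apply, Matrix.one_apply]
  congr 1
  by_cases hij : i = j
  · rw [if_pos hij, if_pos (by rw [hij])]
  · rw [if_neg hij, if_neg (fun h => hij (Fin.castSucc_injective _ h))]

lemma Pind_exists_inv {N d : ℕ} (g : Matrix (Fin d) (Fin N) k)
    (hg : Function.Bijective g.mulVecLin) :
    ∃ g' : Matrix (Fin N) (Fin d) k, g' * g = 1 ∧ g * g' = 1 := by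
  let φ : (Fin N → k) ≃ₗ[k] (Fin d → k) := LinearEquiv.ofBijective g.mulVecLin hg
  have hgm : g = LinearMap.toMatrix' (φ : (Fin N → k) →ₗ[k] (Fin d → k)) := by
    rw [show (φ : (Fin N → k) →ₗ[k] (Fin d → k)) = g.mulVecLin from rfl,
      ← Matrix.toLin'_apply', LinearMap.toMatrix'_toLin']
  refine ⟨LinearMap.toMatrix' (φ.symm : (Fin d → k) →ₗ[k] (Fin N → k)), ?_, ?_⟩
  · rw [hgm, ← LinearMap.toMatrix'_comp]
    have : (φ.symm : (Fin d → k) →ₗ[k] (Fin N → k)) ∘ₗ (φ : (Fin N → k) →ₗ[k] (Fin d → k))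
        = LinearMap.id := by ext v : 1; simp
    rw [this, LinearMap.toMatrix'_id]
  · rw [hgm, ← LinearMap.toMatrix'_comp]
    have : (φ : (Fin N → k) →ₗ[k] (Fin d → k)) ∘ₗ (φ.symm : (Fin d → k) →ₗ[k] (Fin N → k))
        = LinearMap.id := by ext v : 1; simp
    rw [this, LinearMap.toMatrix'_id]

def Pind_proj (k : Type) [Field k] (a b : ℕ) : Matrix (Fin (a+b)) (Fin (a+b)) k :=
  (Matrix.fromBlocks (1 : Matrix (Fin a) (Fin a) k) 0 0 (0 : Matrix (Fin b) (Fin b) k)).submatrix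
    ⇑finSumFinEquiv.symm ⇑finSumFinEquiv.symm

lemma Pind_proj_idem (a b : ℕ) : Pind_proj k a b * Pind_proj k a b = Pind_proj k a b := by
  unfold Pind_proj
  rw [Matrix.submatrix_mul_equiv _ _ _ finSumFinEquiv.symm _, Matrix.fromBlocks_multiply]
  simp

lemma Pind_proj_eq_zero {a b : ℕ} (h : Pind_proj k a b = 0) : a = 0 := by
  by_contra ha
  have i0 : Fin a := ⟨0, Nat.pos_of_ne_zero ha⟩
  have := congrFun (congrFun h (finSumFinEquiv (Sum.inl i0))) (finSumFinEquiv (Sum.inl i0))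
  simp [Pind_proj, Matrix.submatrix_apply] at this

lemma Pind_proj_eq_one {a b : ℕ} (h : Pind_proj k a b = 1) : b = 0 := by
  by_contra hb
  have i0 : Fin b := ⟨0, Nat.pos_of_ne_zero hb⟩
  have := congrFun (congrFun h (finSumFinEquiv (Sum.inr i0))) (finSumFinEquiv (Sum.inr i0))
  simp [Pind_proj, Matrix.submatrix_apply, Matrix.one_apply] at this

lemma Pind_proj_comm {a b a' b' : ℕ} (X : Matrix (Fin a) (Fin a') k) (Y : Matrix (Fin b) (Fin b') k) :
    Pind_proj k a b *
        ((Matrix.fromBlocks X 0 0 Y).submatrix ⇑finSumFinEquiv.symm ⇑finSumFinEquiv.symm)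
      = ((Matrix.fromBlocks X 0 0 Y).submatrix ⇑finSumFinEquiv.symm ⇑finSumFinEquiv.symm) *
        Pind_proj k a' b' := by
  unfold Pind_proj
  rw [Matrix.submatrix_mul_equiv _ _ _ finSumFinEquiv.symm _,
    Matrix.submatrix_mul_equiv _ _ _ finSumFinEquiv.symm _,
    Matrix.fromBlocks_multiply, Matrix.fromBlocks_multiply]
  simp

lemma Pind_main {n a b a' b' : ℕ}
    (DA DB : Matrix (Fin (a+b)) (Fin (a'+b')) k)
    (hDA : Pind_proj k a b * DA = DA * Pind_proj k a' b')
    (hDB : Pind_proj k a b * DB = DB * Pind_proj k a' b')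
    (g1 : Matrix (Fin (a+b)) (Fin (n+1)) k) (g2 : Matrix (Fin (a'+b')) (Fin n) k)
    (hb1 : Function.Bijective g1.mulVecLin) (hb2 : Function.Bijective g2.mulVecLin)
    (hfa : g1 * PindPA k n = DA * g2) (hfb : g1 * PindPB k n = DB * g2) :
    (a = 0 ∧ a' = 0) ∨ (b = 0 ∧ b' = 0) := by
  obtain ⟨g1', hg1l, hg1r⟩ := Pind_exists_inv g1 hb1
  obtain ⟨g2', hg2l, hg2r⟩ := Pind_exists_inv g2 hb2
  have hkeyA : PindPA k n * g2' = g1' * DA := by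
    have h1 : g1' * (g1 * PindPA k n * g2') = g1' * (DA * g2 * g2') := by rw [hfa]
    rwa [Matrix.mul_assoc g1 _ g2', ← Matrix.mul_assoc g1' g1 _, hg1l, Matrix.one_mul,
      Matrix.mul_assoc DA g2 g2', hg2r, Matrix.mul_one] at h1
  have hkeyB : PindPB k n * g2' = g1' * DB := by
    have h1 : g1' * (g1 * PindPB k n * g2') = g1' * (DB * g2 * g2') := by rw [hfb]
    rwa [Matrix.mul_assoc g1 _ g2', ← Matrix.mul_assoc g1' g1 _, hg1l, Matrix.one_mul,
      Matrix.mul_assoc DB g2 g2', hg2r, Matrix.mul_one] at h1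
  have hA : (g1' * (Pind_proj k a b * g1)) * PindPA k n
      = PindPA k n * (g2' * (Pind_proj k a' b' * g2)) := by
    calc (g1' * (Pind_proj k a b * g1)) * PindPA k n
        = g1' * (Pind_proj k a b * (g1 * PindPA k n)) := by simp only [Matrix.mul_assoc]
      _ = g1' * (Pind_proj k a b * (DA * g2)) := by rw [hfa]
      _ = g1' * DA * (Pind_proj k a' b' * g2) := by
          rw [← Matrix.mul_assoc (Pind_proj k a b) DA g2, hDA]
          simp only [Matrix.mul_assoc]
      _ = PindPA k n * g2' * (Pind_proj k a' b' * g2) := by rw [← hkeyA]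
      _ = PindPA k n * (g2' * (Pind_proj k a' b' * g2)) := by simp only [Matrix.mul_assoc]
  have hB : (g1' * (Pind_proj k a b * g1)) * PindPB k n
      = PindPB k n * (g2' * (Pind_proj k a' b' * g2)) := by
    calc (g1' * (Pind_proj k a b * g1)) * PindPB k n
        = g1' * (Pind_proj k a b * (g1 * PindPB k n)) := by simp only [Matrix.mul_assoc]
      _ = g1' * (Pind_proj k a b * (DB * g2)) := by rw [hfb]
      _ = g1' * DB * (Pind_proj k a' b' * g2) := by
          rw [← Matrix.mul_assoc (Pind_proj k a b) DB g2, hDB]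
          simp only [Matrix.mul_assoc]
      _ = PindPB k n * g2' * (Pind_proj k a' b' * g2) := by rw [← hkeyB]
      _ = PindPB k n * (g2' * (Pind_proj k a' b' * g2)) := by simp only [Matrix.mul_assoc]
  obtain ⟨hs1, hs2⟩ := Pind_scalar hA hB
  set c : k := (g1' * (Pind_proj k a b * g1)) 0 0 with hc
  have hrec1 : g1 * ((g1' * (Pind_proj k a b * g1)) * g1') = Pind_proj k a b := by
    calc g1 * ((g1' * (Pind_proj k a b * g1)) * g1')
        = (g1 * g1') * (Pind_proj k a b * (g1 * g1')) := by simp only [Matrix.mul_assoc]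
      _ = Pind_proj k a b := by rw [hg1r, Matrix.one_mul, Matrix.mul_one]
  have hrec2 : g2 * ((g2' * (Pind_proj k a' b' * g2)) * g2') = Pind_proj k a' b' := by
    calc g2 * ((g2' * (Pind_proj k a' b' * g2)) * g2')
        = (g2 * g2') * (Pind_proj k a' b' * (g2 * g2')) := by simp only [Matrix.mul_assoc]
      _ = Pind_proj k a' b' := by rw [hg2r, Matrix.one_mul, Matrix.mul_one]
  have hidem : (g1' * (Pind_proj k a b * g1)) * (g1' * (Pind_proj k a b * g1))
      = g1' * (Pind_proj k a b * g1) := by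
    calc (g1' * (Pind_proj k a b * g1)) * (g1' * (Pind_proj k a b * g1))
        = g1' * (Pind_proj k a b * ((g1 * g1') * (Pind_proj k a b * g1))) := by
          simp only [Matrix.mul_assoc]
      _ = g1' * ((Pind_proj k a b * Pind_proj k a b) * g1) := by
          rw [hg1r, Matrix.one_mul, Matrix.mul_assoc]
      _ = g1' * (Pind_proj k a b * g1) := by rw [Pind_proj_idem]
  have hcc : c * c = c := by
    rw [hs1] at hidem
    rw [Matrix.smul_mul, Matrix.mul_smul, smul_smul, one_mul] at hidem
    have := congrFun (congrFun hidem 0) 0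
    simpa [Matrix.one_apply] using this
  have hc01 : c = 0 ∨ c = 1 := by
    have h0 : c * (c - 1) = 0 := by rw [mul_sub, mul_one, hcc, sub_self]
    rcases mul_eq_zero.mp h0 with h | h
    · exact Or.inl h
    · exact Or.inr (sub_eq_zero.mp h)
  rcases hc01 with h0 | h1
  · left
    rw [h0, zero_smul] at hs1 hs2
    have hp1 : Pind_proj k a b = 0 := by rw [← hrec1, hs1, Matrix.zero_mul, Matrix.mul_zero]
    have hp2 : Pind_proj k a' b' = 0 := by rw [← hrec2, hs2, Matrix.zero_mul, Matrix.mul_zero]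
    exact ⟨Pind_proj_eq_zero hp1, Pind_proj_eq_zero hp2⟩
  · right
    rw [h1, one_smul] at hs1 hs2
    have hp1 : Pind_proj k a b = 1 := by rw [← hrec1, hs1, Matrix.one_mul, hg1r]
    have hp2 : Pind_proj k a' b' = 1 := by rw [← hrec2, hs2, Matrix.one_mul, hg2r]
    exact ⟨Pind_proj_eq_one hp1, Pind_proj_eq_one hp2⟩


/-- The preprojective representation `P n` is indecomposable. -/
theorem P_indecomposable (n : ℕ) : (KRep.P k n).Indecomposable := by
  refine ⟨by simp only [KRep.P]; omega, ?_⟩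
  rintro N₁ N₂ ⟨f, hb1, hb2⟩
  have h := Pind_main (k := k) (n := n) (a := N₁.d1) (b := N₂.d1) (a' := N₁.d2) (b' := N₂.d2)
    ((N₁.dsum N₂).A) ((N₁.dsum N₂).B)
    (Pind_proj_comm N₁.A N₂.A) (Pind_proj_comm N₁.B N₂.B)
    f.f1 f.f2 hb1 hb2 f.comm_a f.comm_b
  rcases h with ⟨h1, h2⟩ | ⟨h1, h2⟩
  · left; omega
  · right; omega
end

section
/- Let n ∈ ℕ and let Iₙ be the representation of the Kronecker quiver given by the two maps kⁿ⁺¹ → kⁿ with matrices (Iₙ 0) and (0 Iₙ). Then Iₙ is an indecomposable representation. -/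
open Matrix Finset

variable {k : Type} [Field k]

def KRep.InjA (k : Type) [Field k] (n : ℕ) : Matrix (Fin n) (Fin (n+1)) k :=
  Matrix.of fun i j => if (i : ℕ) = (j : ℕ) then 1 else 0
def KRep.InjB (k : Type) [Field k] (n : ℕ) : Matrix (Fin n) (Fin (n+1)) k :=
  Matrix.of fun i j => if (i : ℕ) + 1 = (j : ℕ) then 1 else 0

lemma inj_endo_scalar (n : ℕ) (g1 : Matrix (Fin n) (Fin n) k)
    (g2 : Matrix (Fin (n+1)) (Fin (n+1)) k)
    (hA : g1 * KRep.InjA k n = KRep.InjA k n * g2)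
    (hB : g1 * KRep.InjB k n = KRep.InjB k n * g2) :
    ∃ c : k, g1 = c • 1 ∧ g2 = c • 1 := by
  -- entrywise relations
  have RA : ∀ (i : Fin n) (j : Fin (n+1)),
      (if h : (j:ℕ) < n then g1 i ⟨j, h⟩ else 0) = g2 ⟨i, by omega⟩ j := by
    intro i j
    have h : (g1 * KRep.InjA k n) i j = (KRep.InjA k n * g2) i j := by rw [hA]
    rw [Matrix.mul_apply, Matrix.mul_apply] at h
    have hL : ∑ m, g1 i m * KRep.InjA k n m j = if h : (j:ℕ) < n then g1 i ⟨j, h⟩ else 0 := by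
      split_ifs with hj
      · rw [Finset.sum_eq_single (⟨(j:ℕ), hj⟩ : Fin n)]
        · simp [KRep.InjA]
        · intro m _ hm
          simp only [KRep.InjA, Matrix.of_apply]
          rw [if_neg, mul_zero]
          intro hmj; exact hm (Fin.ext hmj)
        · simp
      · apply Finset.sum_eq_zero
        intro m _
        simp only [KRep.InjA, Matrix.of_apply]
        rw [if_neg, mul_zero]
        omega
    have hR : ∑ m, KRep.InjA k n i m * g2 m j = g2 ⟨i, by omega⟩ j := by
      rw [Finset.sum_eq_single (⟨(i:ℕ), by omega⟩ : Fin (n+1))]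
      · simp [KRep.InjA]
      · intro m _ hm
        simp only [KRep.InjA, Matrix.of_apply]
        rw [if_neg, zero_mul]
        intro hmj; exact hm (Fin.ext hmj.symm)
      · simp
    rw [hL] at h; rw [hR] at h; exact h
  have RB : ∀ (i : Fin n) (j : Fin (n+1)),
      (if _ : 0 < (j:ℕ) then g1 i ⟨(j:ℕ) - 1, by omega⟩ else 0) = g2 ⟨(i:ℕ)+1, by omega⟩ j := by
    intro i j
    have h : (g1 * KRep.InjB k n) i j = (KRep.InjB k n * g2) i j := by rw [hB]
    rw [Matrix.mul_apply, Matrix.mul_apply] at h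
    have hL : ∑ m, g1 i m * KRep.InjB k n m j
        = if _ : 0 < (j:ℕ) then g1 i ⟨(j:ℕ) - 1, by omega⟩ else 0 := by
      split_ifs with hj
      · rw [Finset.sum_eq_single (⟨(j:ℕ) - 1, by omega⟩ : Fin n)]
        · simp only [KRep.InjB, Matrix.of_apply]
          rw [if_pos (by omega), mul_one]
        · intro m _ hm
          simp only [KRep.InjB, Matrix.of_apply]
          rw [if_neg, mul_zero]
          intro hmj
          refine hm (Fin.ext ?_)
          simp only [Fin.val_mk]
          omega
        · simp
      · apply Finset.sum_eq_zero
        intro m _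
        simp only [KRep.InjB, Matrix.of_apply]
        rw [if_neg, mul_zero]
        omega
    have hR : ∑ m, KRep.InjB k n i m * g2 m j = g2 ⟨(i:ℕ)+1, by omega⟩ j := by
      rw [Finset.sum_eq_single (⟨(i:ℕ)+1, by omega⟩ : Fin (n+1))]
      · simp [KRep.InjB]
      · intro m _ hm
        simp only [KRep.InjB, Matrix.of_apply]
        rw [if_neg, zero_mul]
        intro hmj; exact hm (Fin.ext hmj.symm)
      · simp
    rw [hL] at h; rw [hR] at h; exact h
  -- g1 in terms of g2
  have hg1 : ∀ (i j : Fin n), g1 i j = g2 ⟨i, by omega⟩ ⟨j, by omega⟩ := by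
    intro i j
    have := RA i ⟨(j:ℕ), by omega⟩
    rw [dif_pos j.isLt] at this
    simpa using this
  -- shift property
  have shift : ∀ p q : ℕ, (hp : p < n) → (hq : q < n) →
      g2 ⟨p+1, by omega⟩ ⟨q+1, by omega⟩ = g2 ⟨p, by omega⟩ ⟨q, by omega⟩ := by
    intro p q hp hq
    have h1 := RB ⟨p, hp⟩ ⟨q+1, by omega⟩
    rw [dif_pos (by simp)] at h1
    have h2 := hg1 ⟨p, hp⟩ ⟨q, hq⟩
    simp only at h1 h2
    rw [← h1]
    convert h2 using 2
    exact Fin.ext (Nat.add_sub_cancel q 1)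
  have z0 : ∀ p : ℕ, (hp : p < n) → g2 ⟨p+1, by omega⟩ ⟨0, by omega⟩ = 0 := by
    intro p hp
    have := RB ⟨p, hp⟩ ⟨0, by omega⟩
    rw [dif_neg (by simp)] at this
    exact this.symm
  have zn : ∀ p : ℕ, (hp : p < n) → g2 ⟨p, by omega⟩ ⟨n, by omega⟩ = 0 := by
    intro p hp
    have := RA ⟨p, hp⟩ ⟨n, by omega⟩
    rw [dif_neg (by simp)] at this
    exact this.symm
  -- diagonal constancy
  have diag : ∀ p : ℕ, (hp : p ≤ n) → g2 ⟨p, by omega⟩ ⟨p, by omega⟩ = g2 ⟨0, by omega⟩ ⟨0, by omega⟩ := by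
    intro p
    induction p with
    | zero => intro _; rfl
    | succ m ih => intro hm; rw [shift m m (by omega) (by omega)]; exact ih (by omega)
  -- above-diagonal zeros, by downward induction on n - q
  have upper : ∀ d p q : ℕ, (h : p < q) → (hq : q ≤ n) → n - q = d →
      g2 ⟨p, by omega⟩ ⟨q, by omega⟩ = 0 := by
    intro d
    induction d with
    | zero =>
      intro p q h hq hd
      have : q = n := by omega
      subst this
      exact zn p (by omega)
    | succ m ih =>
      intro p q h hq hd
      have hq' : q < n := by omega
      rw [show (⟨p, by omega⟩ : Fin (n+1)) = ⟨p, by omega⟩ from rfl]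
      rw [← shift p q (by omega) hq']
      exact ih (p+1) (q+1) (by omega) (by omega) (by omega)
  have lower : ∀ q p : ℕ, (h : q < p) → (hp : p ≤ n) →
      g2 ⟨p, by omega⟩ ⟨q, by omega⟩ = 0 := by
    intro q
    induction q with
    | zero =>
      intro p h hp
      obtain ⟨p', rfl⟩ : ∃ p', p = p' + 1 := ⟨p - 1, by omega⟩
      exact z0 p' (by omega)
    | succ m ih =>
      intro p h hp
      obtain ⟨p', rfl⟩ : ∃ p', p = p' + 1 := ⟨p - 1, by omega⟩
      rw [shift p' m (by omega) (by omega)]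
      exact ih p' (by omega) (by omega)
  refine ⟨g2 ⟨0, by omega⟩ ⟨0, by omega⟩, ?_, ?_⟩
  · ext i j
    rw [hg1 i j]
    by_cases hij : (i:ℕ) = (j:ℕ)
    · have : i = j := Fin.ext hij
      subst this
      rw [diag i (by omega)]
      simp [Matrix.one_apply]
    · rcases Nat.lt_or_ge (i:ℕ) (j:ℕ) with h | h
      · rw [upper (n - j) i j h (by omega) rfl]
        simp [Matrix.one_apply, Fin.ext_iff, hij]
      · rw [lower j i (by omega) (by omega)]
        simp [Matrix.one_apply, Fin.ext_iff, hij]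
  · ext i j
    have hi : i = ⟨(i:ℕ), by omega⟩ := rfl
    have hj : j = ⟨(j:ℕ), by omega⟩ := rfl
    by_cases hij : (i:ℕ) = (j:ℕ)
    · have : i = j := Fin.ext hij
      subst this
      rw [hi, diag i (by omega)]
      simp [Matrix.one_apply]
    · rcases Nat.lt_or_ge (i:ℕ) (j:ℕ) with h | h
      · rw [hi, hj, upper (n - j) i j h (by omega) rfl]
        simp [Matrix.one_apply, Fin.ext_iff, hij]
      · rw [hi, hj, lower j i (by omega) (by omega)]
        simp [Matrix.one_apply, Fin.ext_iff, hij]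

lemma proj_eq_zero_dim {a b : ℕ}
    (h : (Matrix.reindex finSumFinEquiv finSumFinEquiv
      (Matrix.fromBlocks (1 : Matrix (Fin a) (Fin a) k) 0 0
        (0 : Matrix (Fin b) (Fin b) k))) = 0) : a = 0 := by
  by_contra ha
  have h0 : 0 < a := Nat.pos_of_ne_zero ha
  have h2 := Matrix.ext_iff.mpr h (finSumFinEquiv (Sum.inl ⟨0, h0⟩))
    (finSumFinEquiv (Sum.inl ⟨0, h0⟩))
  rw [Matrix.reindex_apply, Matrix.submatrix_apply, Equiv.symm_apply_apply,
    Matrix.fromBlocks_apply₁₁, Matrix.one_apply_eq] at h2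
  simp at h2
lemma proj_eq_one_dim {a b : ℕ}
    (h : (Matrix.reindex finSumFinEquiv finSumFinEquiv
      (Matrix.fromBlocks (1 : Matrix (Fin a) (Fin a) k) 0 0
        (0 : Matrix (Fin b) (Fin b) k))) = 1) : b = 0 := by
  by_contra hb
  have h0 : 0 < b := Nat.pos_of_ne_zero hb
  have h2 := Matrix.ext_iff.mpr h (finSumFinEquiv (Sum.inr ⟨0, h0⟩))
    (finSumFinEquiv (Sum.inr ⟨0, h0⟩))
  rw [Matrix.reindex_apply, Matrix.submatrix_apply, Equiv.symm_apply_apply,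
    Matrix.fromBlocks_apply₂₂, Matrix.one_apply_eq] at h2
  simp at h2

/-- The preinjective representation `I n` is indecomposable. -/
theorem Inj_indecomposable (n : ℕ) : (KRep.Inj k n).Indecomposable := by
  constructor
  · show 0 < n + (n + 1)
    omega
  · rintro N₁ N₂ ⟨f, hb1, hb2⟩
    let F1 : Matrix (Fin (N₁.d1 + N₂.d1)) (Fin n) k := f.f1
    let F2 : Matrix (Fin (N₁.d2 + N₂.d2)) (Fin (n + 1)) k := f.f2
    have hb1' : Function.Bijective (Matrix.toLin' F1) := by
      rw [Matrix.toLin'_apply']; exact hb1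
    have hb2' : Function.Bijective (Matrix.toLin' F2) := by
      rw [Matrix.toLin'_apply']; exact hb2
    let E1 := LinearEquiv.ofBijective (Matrix.toLin' F1) hb1'
    let E2 := LinearEquiv.ofBijective (Matrix.toLin' F2) hb2'
    let G1 : Matrix (Fin n) (Fin (N₁.d1 + N₂.d1)) k :=
      LinearMap.toMatrix' (E1.symm : _ →ₗ[k] _)
    let G2 : Matrix (Fin (n + 1)) (Fin (N₁.d2 + N₂.d2)) k :=
      LinearMap.toMatrix' (E2.symm : _ →ₗ[k] _)
    have hG1l : G1 * F1 = 1 := by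
      apply Matrix.toLin'.injective
      rw [Matrix.toLin'_mul, Matrix.toLin'_one, Matrix.toLin'_toMatrix']
      exact LinearMap.ext fun v => E1.symm_apply_apply v
    have hG1r : F1 * G1 = 1 := by
      apply Matrix.toLin'.injective
      rw [Matrix.toLin'_mul, Matrix.toLin'_one, Matrix.toLin'_toMatrix']
      exact LinearMap.ext fun v => E1.apply_symm_apply v
    have hG2l : G2 * F2 = 1 := by
      apply Matrix.toLin'.injective
      rw [Matrix.toLin'_mul, Matrix.toLin'_one, Matrix.toLin'_toMatrix']
      exact LinearMap.ext fun v => E2.symm_apply_apply v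
    have hG2r : F2 * G2 = 1 := by
      apply Matrix.toLin'.injective
      rw [Matrix.toLin'_mul, Matrix.toLin'_one, Matrix.toLin'_toMatrix']
      exact LinearMap.ext fun v => E2.apply_symm_apply v
    set P1 : Matrix (Fin (N₁.d1 + N₂.d1)) (Fin (N₁.d1 + N₂.d1)) k :=
      Matrix.reindex finSumFinEquiv finSumFinEquiv
        (Matrix.fromBlocks (1 : Matrix (Fin N₁.d1) (Fin N₁.d1) k) 0 0 0) with hP1def
    set P2 : Matrix (Fin (N₁.d2 + N₂.d2)) (Fin (N₁.d2 + N₂.d2)) k :=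
      Matrix.reindex finSumFinEquiv finSumFinEquiv
        (Matrix.fromBlocks (1 : Matrix (Fin N₁.d2) (Fin N₁.d2) k) 0 0 0) with hP2def
    set DA : Matrix (Fin (N₁.d1 + N₂.d1)) (Fin (N₁.d2 + N₂.d2)) k :=
      Matrix.reindex finSumFinEquiv finSumFinEquiv (Matrix.fromBlocks N₁.A 0 0 N₂.A) with hDAdef
    set DB : Matrix (Fin (N₁.d1 + N₂.d1)) (Fin (N₁.d2 + N₂.d2)) k :=
      Matrix.reindex finSumFinEquiv finSumFinEquiv (Matrix.fromBlocks N₁.B 0 0 N₂.B) with hDBdef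
    have hP1idem : P1 * P1 = P1 := by
      rw [hP1def]
      simp only [Matrix.reindex_apply, Matrix.submatrix_mul_equiv,
        Matrix.fromBlocks_multiply]
      simp
    have hP2idem : P2 * P2 = P2 := by
      rw [hP2def]
      simp only [Matrix.reindex_apply, Matrix.submatrix_mul_equiv,
        Matrix.fromBlocks_multiply]
      simp
    have hPA : P1 * DA = DA * P2 := by
      rw [hP1def, hP2def, hDAdef]
      simp only [Matrix.reindex_apply, Matrix.submatrix_mul_equiv,
        Matrix.fromBlocks_multiply]
      simp
    have hPB : P1 * DB = DB * P2 := by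
      rw [hP1def, hP2def, hDBdef]
      simp only [Matrix.reindex_apply, Matrix.submatrix_mul_equiv,
        Matrix.fromBlocks_multiply]
      simp
    have hcA : F1 * KRep.InjA k n = DA * F2 := f.comm_a
    have hcB : F1 * KRep.InjB k n = DB * F2 := f.comm_b
    have hmidA : G1 * DA = KRep.InjA k n * G2 := by
      calc G1 * DA = G1 * DA * (F2 * G2) := by rw [hG2r, Matrix.mul_one]
        _ = G1 * (DA * F2) * G2 := by simp only [Matrix.mul_assoc]
        _ = G1 * (F1 * KRep.InjA k n) * G2 := by rw [hcA]
        _ = (G1 * F1) * (KRep.InjA k n * G2) := by simp only [Matrix.mul_assoc]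
        _ = KRep.InjA k n * G2 := by rw [hG1l, Matrix.one_mul]
    have hmidB : G1 * DB = KRep.InjB k n * G2 := by
      calc G1 * DB = G1 * DB * (F2 * G2) := by rw [hG2r, Matrix.mul_one]
        _ = G1 * (DB * F2) * G2 := by simp only [Matrix.mul_assoc]
        _ = G1 * (F1 * KRep.InjB k n) * G2 := by rw [hcB]
        _ = (G1 * F1) * (KRep.InjB k n * G2) := by simp only [Matrix.mul_assoc]
        _ = KRep.InjB k n * G2 := by rw [hG1l, Matrix.one_mul]
    set g1 : Matrix (Fin n) (Fin n) k := G1 * (P1 * F1) with hg1def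
    set g2 : Matrix (Fin (n + 1)) (Fin (n + 1)) k := G2 * (P2 * F2) with hg2def
    have hgA : g1 * KRep.InjA k n = KRep.InjA k n * g2 := by
      calc g1 * KRep.InjA k n = G1 * (P1 * (F1 * KRep.InjA k n)) := by
            rw [hg1def]; simp only [Matrix.mul_assoc]
        _ = G1 * ((P1 * DA) * F2) := by rw [hcA]; simp only [Matrix.mul_assoc]
        _ = G1 * ((DA * P2) * F2) := by rw [hPA]
        _ = (G1 * DA) * (P2 * F2) := by simp only [Matrix.mul_assoc]
        _ = KRep.InjA k n * g2 := by
            rw [hmidA, hg2def]; simp only [Matrix.mul_assoc]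
    have hgB : g1 * KRep.InjB k n = KRep.InjB k n * g2 := by
      calc g1 * KRep.InjB k n = G1 * (P1 * (F1 * KRep.InjB k n)) := by
            rw [hg1def]; simp only [Matrix.mul_assoc]
        _ = G1 * ((P1 * DB) * F2) := by rw [hcB]; simp only [Matrix.mul_assoc]
        _ = G1 * ((DB * P2) * F2) := by rw [hPB]
        _ = (G1 * DB) * (P2 * F2) := by simp only [Matrix.mul_assoc]
        _ = KRep.InjB k n * g2 := by
            rw [hmidB, hg2def]; simp only [Matrix.mul_assoc]
    have hg2idem : g2 * g2 = g2 := by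
      calc g2 * g2 = G2 * (P2 * ((F2 * G2) * (P2 * F2))) := by
            rw [hg2def]; simp only [Matrix.mul_assoc]
        _ = G2 * ((P2 * P2) * F2) := by
            rw [hG2r, Matrix.one_mul]; simp only [Matrix.mul_assoc]
        _ = g2 := by rw [hP2idem, hg2def]
    obtain ⟨c, hc1, hc2⟩ := inj_endo_scalar n g1 g2 hgA hgB
    have hcc : c * c = c := by
      have h := hg2idem
      rw [hc2] at h
      have h3 := Matrix.ext_iff.mpr h ⟨0, by omega⟩ ⟨0, by omega⟩
      simpa [Matrix.smul_mul, Matrix.mul_smul, Matrix.one_apply] using h3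
    have hc01 : c = 0 ∨ c = 1 := by
      rcases mul_eq_zero.mp (show c * (c - 1) = 0 by linear_combination hcc) with h | h
      · exact Or.inl h
      · exact Or.inr (sub_eq_zero.mp h)
    have hP1back : P1 = F1 * g1 * G1 := by
      calc P1 = (F1 * G1) * P1 * (F1 * G1) := by
            rw [hG1r, Matrix.one_mul, Matrix.mul_one]
        _ = F1 * g1 * G1 := by rw [hg1def]; simp only [Matrix.mul_assoc]
    have hP2back : P2 = F2 * g2 * G2 := by
      calc P2 = (F2 * G2) * P2 * (F2 * G2) := by
            rw [hG2r, Matrix.one_mul, Matrix.mul_one]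
        _ = F2 * g2 * G2 := by rw [hg2def]; simp only [Matrix.mul_assoc]
    rcases hc01 with hc | hc
    · left
      subst hc
      have hz1 : g1 = 0 := by rw [hc1, zero_smul]
      have hz2 : g2 = 0 := by rw [hc2, zero_smul]
      have hp1 : P1 = 0 := by rw [hP1back, hz1, Matrix.mul_zero, Matrix.zero_mul]
      have hp2 : P2 = 0 := by rw [hP2back, hz2, Matrix.mul_zero, Matrix.zero_mul]
      have e1 : N₁.d1 = 0 := proj_eq_zero_dim (hP1def ▸ hp1)
      have e2 : N₁.d2 = 0 := proj_eq_zero_dim (hP2def ▸ hp2)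
      omega
    · right
      subst hc
      have hz1 : g1 = 1 := by rw [hc1, one_smul]
      have hz2 : g2 = 1 := by rw [hc2, one_smul]
      have hp1 : P1 = 1 := by rw [hP1back, hz1, Matrix.mul_one, hG1r]
      have hp2 : P2 = 1 := by rw [hP2back, hz2, Matrix.mul_one, hG2r]
      have e1 : N₂.d1 = 0 := proj_eq_one_dim (hP1def ▸ hp1)
      have e2 : N₂.d2 = 0 := proj_eq_one_dim (hP2def ▸ hp2)
      omega
end

section
/- The extension monoid product on isomorphism classes of Kronecker representations is associative: for sets of isomorphism classes 𝒜 ⊆ M_d, ℬ ⊆ M_e, 𝒞 ⊆ M_f, one has (𝒜 * ℬ) * 𝒞 = 𝒜 * (ℬ * 𝒞), where 𝒜 * ℬ = {[Y] : there exists a short exact sequence 0 → N → Y → M → 0 with [M] ∈ 𝒜, [N] ∈ ℬ}. -/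
open Matrix Finset

variable {k : Type} [Field k]

/-- A set of representations is closed under isomorphism (so it models a set
of isomorphism classes). -/
def IsoClosed (S : Set (KRep k)) : Prop := ∀ X Y : KRep k, KIso X Y → X ∈ S → Y ∈ S

/-- Reineke's extension monoid product: isoclasses of extensions of members of
`𝒜` by members of `ℬ`. -/
def ExtProd (𝒜 ℬ : Set (KRep k)) : Set (KRep k) :=
  {Y | ∃ M ∈ 𝒜, ∃ N ∈ ℬ, SES N Y M}

/-! ### Auxiliary machinery -/

section Aux

private lemma mulVecLin_toMatrix'' {m n : ℕ} (l : (Fin n → k) →ₗ[k] Fin m → k) :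
    (LinearMap.toMatrix' l).mulVecLin = l := by
  rw [← Matrix.toLin'_apply', Matrix.toLin'_toMatrix']

/-- Build a `KHom` from a pair of linear maps with commuting squares. -/
noncomputable def KHom.ofLin {M N : KRep k} (l1 : (Fin M.d1 → k) →ₗ[k] Fin N.d1 → k)
    (l2 : (Fin M.d2 → k) →ₗ[k] Fin N.d2 → k)
    (ha : l1 ∘ₗ M.A.mulVecLin = N.A.mulVecLin ∘ₗ l2)
    (hb : l1 ∘ₗ M.B.mulVecLin = N.B.mulVecLin ∘ₗ l2) : KHom M N where
  f1 := LinearMap.toMatrix' l1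
  f2 := LinearMap.toMatrix' l2
  comm_a := Matrix.toLin'.injective (by
    rw [Matrix.toLin'_mul, Matrix.toLin'_mul, Matrix.toLin'_toMatrix', Matrix.toLin'_toMatrix',
      Matrix.toLin'_apply', Matrix.toLin'_apply', ha])
  comm_b := Matrix.toLin'.injective (by
    rw [Matrix.toLin'_mul, Matrix.toLin'_mul, Matrix.toLin'_toMatrix', Matrix.toLin'_toMatrix',
      Matrix.toLin'_apply', Matrix.toLin'_apply', hb])

@[simp] lemma KHom.ofLin_f1 {M N : KRep k} (l1 : (Fin M.d1 → k) →ₗ[k] Fin N.d1 → k)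
    (l2 : (Fin M.d2 → k) →ₗ[k] Fin N.d2 → k) (ha hb) :
    (KHom.ofLin l1 l2 ha hb).f1.mulVecLin = l1 := mulVecLin_toMatrix'' _

@[simp] lemma KHom.ofLin_f2 {M N : KRep k} (l1 : (Fin M.d1 → k) →ₗ[k] Fin N.d1 → k)
    (l2 : (Fin M.d2 → k) →ₗ[k] Fin N.d2 → k) (ha hb) :
    (KHom.ofLin l1 l2 ha hb).f2.mulVecLin = l2 := mulVecLin_toMatrix'' _

/-- The commuting square of a `KHom`, as linear maps. -/
lemma KHom.comm_a' {M N : KRep k} (f : KHom M N) :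
    f.f1.mulVecLin ∘ₗ M.A.mulVecLin = N.A.mulVecLin ∘ₗ f.f2.mulVecLin := by
  rw [← Matrix.mulVecLin_mul, ← Matrix.mulVecLin_mul, f.comm_a]

lemma KHom.comm_b' {M N : KRep k} (f : KHom M N) :
    f.f1.mulVecLin ∘ₗ M.B.mulVecLin = N.B.mulVecLin ∘ₗ f.f2.mulVecLin := by
  rw [← Matrix.mulVecLin_mul, ← Matrix.mulVecLin_mul, f.comm_b]

/-- Composition of `KHom`s. -/
noncomputable def KHom.comp {X Y Z : KRep k} (g : KHom Y Z) (f : KHom X Y) : KHom X Z :=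
  KHom.ofLin (g.f1.mulVecLin ∘ₗ f.f1.mulVecLin) (g.f2.mulVecLin ∘ₗ f.f2.mulVecLin)
    (by rw [LinearMap.comp_assoc, f.comm_a', ← LinearMap.comp_assoc, g.comm_a',
      LinearMap.comp_assoc])
    (by rw [LinearMap.comp_assoc, f.comm_b', ← LinearMap.comp_assoc, g.comm_b',
      LinearMap.comp_assoc])

@[simp] lemma KHom.comp_f1 {X Y Z : KRep k} (g : KHom Y Z) (f : KHom X Y) :
    (g.comp f).f1.mulVecLin = g.f1.mulVecLin ∘ₗ f.f1.mulVecLin := by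
  simp [KHom.comp]

@[simp] lemma KHom.comp_f2 {X Y Z : KRep k} (g : KHom Y Z) (f : KHom X Y) :
    (g.comp f).f2.mulVecLin = g.f2.mulVecLin ∘ₗ f.f2.mulVecLin := by
  simp [KHom.comp]

/-- The linear equivalence between a subspace of `k^n` and a standard space. -/
noncomputable def subEquiv {n : ℕ} (U : Submodule k (Fin n → k)) :
    U ≃ₗ[k] (Fin (Module.finrank k U) → k) := (Module.finBasis k U).equivFun

/-- The linear equivalence between a quotient of `k^n` and a standard space. -/
noncomputable def quotEquiv {n : ℕ} (U : Submodule k (Fin n → k)) :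
    ((Fin n → k) ⧸ U) ≃ₗ[k] (Fin (Module.finrank k ((Fin n → k) ⧸ U)) → k) :=
  (Module.finBasis k _).equivFun

variable (Y : KRep k) (U1 : Submodule k (Fin Y.d1 → k)) (U2 : Submodule k (Fin Y.d2 → k))

/-- Subrepresentation on an invariant pair of subspaces. -/
noncomputable def KRep.sub (ha : ∀ x ∈ U2, Y.A.mulVecLin x ∈ U1)
    (hb : ∀ x ∈ U2, Y.B.mulVecLin x ∈ U1) : KRep k where
  d1 := Module.finrank k U1
  d2 := Module.finrank k U2
  A := LinearMap.toMatrix'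
    ((subEquiv U1).toLinearMap ∘ₗ Y.A.mulVecLin.restrict ha ∘ₗ (subEquiv U2).symm.toLinearMap)
  B := LinearMap.toMatrix'
    ((subEquiv U1).toLinearMap ∘ₗ Y.B.mulVecLin.restrict hb ∘ₗ (subEquiv U2).symm.toLinearMap)

/-- Inclusion of a subrepresentation. -/
noncomputable def KRep.incl (ha : ∀ x ∈ U2, Y.A.mulVecLin x ∈ U1)
    (hb : ∀ x ∈ U2, Y.B.mulVecLin x ∈ U1) : KHom (Y.sub U1 U2 ha hb) Y :=
  KHom.ofLin (U1.subtype ∘ₗ (subEquiv U1).symm.toLinearMap)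
    (U2.subtype ∘ₗ (subEquiv U2).symm.toLinearMap)
    (by
      show (U1.subtype ∘ₗ (subEquiv U1).symm.toLinearMap) ∘ₗ
        (LinearMap.toMatrix' ((subEquiv U1).toLinearMap ∘ₗ Y.A.mulVecLin.restrict ha ∘ₗ
          (subEquiv U2).symm.toLinearMap)).mulVecLin
        = Y.A.mulVecLin ∘ₗ U2.subtype ∘ₗ (subEquiv U2).symm.toLinearMap
      rw [mulVecLin_toMatrix'']
      ext x
      simp [LinearMap.restrict_apply])
    (by
      show (U1.subtype ∘ₗ (subEquiv U1).symm.toLinearMap) ∘ₗ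
        (LinearMap.toMatrix' ((subEquiv U1).toLinearMap ∘ₗ Y.B.mulVecLin.restrict hb ∘ₗ
          (subEquiv U2).symm.toLinearMap)).mulVecLin
        = Y.B.mulVecLin ∘ₗ U2.subtype ∘ₗ (subEquiv U2).symm.toLinearMap
      rw [mulVecLin_toMatrix'']
      ext x
      simp [LinearMap.restrict_apply])

lemma KRep.incl_mono (ha : ∀ x ∈ U2, Y.A.mulVecLin x ∈ U1)
    (hb : ∀ x ∈ U2, Y.B.mulVecLin x ∈ U1) : (Y.incl U1 U2 ha hb).Mono := by
  constructor <;>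
  · rw [KRep.incl]
    simp only [KHom.ofLin_f1, KHom.ofLin_f2, LinearMap.coe_comp]
    exact (Subtype.val_injective.comp (LinearEquiv.injective _))

@[simp] lemma KRep.range_incl_f1 (ha : ∀ x ∈ U2, Y.A.mulVecLin x ∈ U1)
    (hb : ∀ x ∈ U2, Y.B.mulVecLin x ∈ U1) :
    LinearMap.range (Y.incl U1 U2 ha hb).f1.mulVecLin = U1 := by
  rw [KRep.incl]
  simp only [KHom.ofLin_f1]
  show LinearMap.range (U1.subtype ∘ₗ (subEquiv U1).symm.toLinearMap) = U1
  rw [LinearMap.range_comp, LinearEquiv.range, Submodule.map_top, Submodule.range_subtype]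

@[simp] lemma KRep.range_incl_f2 (ha : ∀ x ∈ U2, Y.A.mulVecLin x ∈ U1)
    (hb : ∀ x ∈ U2, Y.B.mulVecLin x ∈ U1) :
    LinearMap.range (Y.incl U1 U2 ha hb).f2.mulVecLin = U2 := by
  rw [KRep.incl]
  simp only [KHom.ofLin_f2]
  show LinearMap.range (U2.subtype ∘ₗ (subEquiv U2).symm.toLinearMap) = U2
  rw [LinearMap.range_comp, LinearEquiv.range, Submodule.map_top, Submodule.range_subtype]

/-- Quotient representation by an invariant pair of subspaces. -/
noncomputable def KRep.quot (ha : U2 ≤ U1.comap Y.A.mulVecLin)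
    (hb : U2 ≤ U1.comap Y.B.mulVecLin) : KRep k where
  d1 := Module.finrank k ((Fin Y.d1 → k) ⧸ U1)
  d2 := Module.finrank k ((Fin Y.d2 → k) ⧸ U2)
  A := LinearMap.toMatrix'
    ((quotEquiv U1).toLinearMap ∘ₗ Submodule.mapQ U2 U1 Y.A.mulVecLin ha ∘ₗ
      (quotEquiv U2).symm.toLinearMap)
  B := LinearMap.toMatrix'
    ((quotEquiv U1).toLinearMap ∘ₗ Submodule.mapQ U2 U1 Y.B.mulVecLin hb ∘ₗ
      (quotEquiv U2).symm.toLinearMap)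

/-- Projection onto a quotient representation. -/
noncomputable def KRep.proj (ha : U2 ≤ U1.comap Y.A.mulVecLin)
    (hb : U2 ≤ U1.comap Y.B.mulVecLin) : KHom Y (Y.quot U1 U2 ha hb) :=
  KHom.ofLin ((quotEquiv U1).toLinearMap ∘ₗ U1.mkQ) ((quotEquiv U2).toLinearMap ∘ₗ U2.mkQ)
    (by
      show ((quotEquiv U1).toLinearMap ∘ₗ U1.mkQ) ∘ₗ Y.A.mulVecLin
        = (LinearMap.toMatrix' ((quotEquiv U1).toLinearMap ∘ₗ Submodule.mapQ U2 U1 Y.A.mulVecLin ha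
            ∘ₗ (quotEquiv U2).symm.toLinearMap)).mulVecLin ∘ₗ
          ((quotEquiv U2).toLinearMap ∘ₗ U2.mkQ)
      rw [mulVecLin_toMatrix'']
      ext x
      simp [Submodule.mapQ_apply])
    (by
      show ((quotEquiv U1).toLinearMap ∘ₗ U1.mkQ) ∘ₗ Y.B.mulVecLin
        = (LinearMap.toMatrix' ((quotEquiv U1).toLinearMap ∘ₗ Submodule.mapQ U2 U1 Y.B.mulVecLin hb
            ∘ₗ (quotEquiv U2).symm.toLinearMap)).mulVecLin ∘ₗ
          ((quotEquiv U2).toLinearMap ∘ₗ U2.mkQ)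
      rw [mulVecLin_toMatrix'']
      ext x
      simp [Submodule.mapQ_apply])

lemma KRep.proj_epi (ha : U2 ≤ U1.comap Y.A.mulVecLin)
    (hb : U2 ≤ U1.comap Y.B.mulVecLin) : (Y.proj U1 U2 ha hb).Epi := by
  constructor <;>
  · rw [KRep.proj]
    simp only [KHom.ofLin_f1, KHom.ofLin_f2, LinearMap.coe_comp]
    exact (LinearEquiv.surjective (quotEquiv _)).comp (Submodule.mkQ_surjective _)

@[simp] lemma KRep.ker_proj_f1 (ha : U2 ≤ U1.comap Y.A.mulVecLin)
    (hb : U2 ≤ U1.comap Y.B.mulVecLin) :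
    LinearMap.ker (Y.proj U1 U2 ha hb).f1.mulVecLin = U1 := by
  rw [KRep.proj]
  simp only [KHom.ofLin_f1]
  show LinearMap.ker ((quotEquiv U1).toLinearMap ∘ₗ U1.mkQ) = U1
  rw [LinearMap.ker_comp, LinearEquiv.ker, Submodule.comap_bot, Submodule.ker_mkQ]

@[simp] lemma KRep.ker_proj_f2 (ha : U2 ≤ U1.comap Y.A.mulVecLin)
    (hb : U2 ≤ U1.comap Y.B.mulVecLin) :
    LinearMap.ker (Y.proj U1 U2 ha hb).f2.mulVecLin = U2 := by
  rw [KRep.proj]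
  simp only [KHom.ofLin_f2]
  show LinearMap.ker ((quotEquiv U2).toLinearMap ∘ₗ U2.mkQ) = U2
  rw [LinearMap.ker_comp, LinearEquiv.ker, Submodule.comap_bot, Submodule.ker_mkQ]

/-- Linear lifting along a surjection. -/
private lemma exists_lin_lift {a b c : ℕ} (g : (Fin a → k) →ₗ[k] Fin b → k)
    (φ : (Fin a → k) →ₗ[k] Fin c → k) (hg : Function.Surjective g)
    (hker : LinearMap.ker g ≤ LinearMap.ker φ) :
    ∃ μ : (Fin b → k) →ₗ[k] Fin c → k, μ ∘ₗ g = φ := by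
  obtain ⟨s, hs⟩ := g.exists_rightInverse_of_surjective (LinearMap.range_eq_top.2 hg)
  refine ⟨φ ∘ₗ s, LinearMap.ext fun x => ?_⟩
  have h1 : g (s (g x)) = g x := LinearMap.congr_fun hs (g x)
  have h2 : s (g x) - x ∈ LinearMap.ker g := by rw [LinearMap.mem_ker, map_sub, h1, sub_self]
  have h3 := hker h2
  rw [LinearMap.mem_ker, map_sub, sub_eq_zero] at h3
  simpa using h3

/-- Linear factorization through an injection. -/
private lemma exists_lin_factor {a b c : ℕ} (f : (Fin b → k) →ₗ[k] Fin c → k)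
    (φ : (Fin a → k) →ₗ[k] Fin c → k) (hf : Function.Injective f)
    (hr : LinearMap.range φ ≤ LinearMap.range f) :
    ∃ ψ : (Fin a → k) →ₗ[k] Fin b → k, f ∘ₗ ψ = φ := by
  refine ⟨(LinearEquiv.ofInjective f hf).symm.toLinearMap ∘ₗ
    φ.codRestrict (LinearMap.range f) (fun x => hr ⟨x, rfl⟩), ?_⟩
  ext x
  have : ∀ y : LinearMap.range f, f ((LinearEquiv.ofInjective f hf).symm y) = y := by
    intro y
    conv_rhs => rw [← (LinearEquiv.ofInjective f hf).apply_symm_apply y]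
    rw [LinearEquiv.ofInjective_apply]
  simpa using this ⟨φ x, hr ⟨x, rfl⟩⟩

/-- Lifting of a `KHom` along an epimorphism. -/
private lemma exists_hom_lift {V B W : KRep k} (g' : KHom V B) (φ : KHom V W) (hg : g'.Epi)
    (h1 : LinearMap.ker g'.f1.mulVecLin ≤ LinearMap.ker φ.f1.mulVecLin)
    (h2 : LinearMap.ker g'.f2.mulVecLin ≤ LinearMap.ker φ.f2.mulVecLin) :
    ∃ μ : KHom B W, μ.f1.mulVecLin ∘ₗ g'.f1.mulVecLin = φ.f1.mulVecLin ∧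
      μ.f2.mulVecLin ∘ₗ g'.f2.mulVecLin = φ.f2.mulVecLin := by
  obtain ⟨μ1, hμ1⟩ := exists_lin_lift g'.f1.mulVecLin φ.f1.mulVecLin hg.1 h1
  obtain ⟨μ2, hμ2⟩ := exists_lin_lift g'.f2.mulVecLin φ.f2.mulVecLin hg.2 h2
  have ca : μ1 ∘ₗ B.A.mulVecLin = W.A.mulVecLin ∘ₗ μ2 := by
    rw [← LinearMap.cancel_right hg.2]
    rw [LinearMap.comp_assoc, ← g'.comm_a', ← LinearMap.comp_assoc, hμ1, φ.comm_a',
      LinearMap.comp_assoc, hμ2]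
  have cb : μ1 ∘ₗ B.B.mulVecLin = W.B.mulVecLin ∘ₗ μ2 := by
    rw [← LinearMap.cancel_right hg.2]
    rw [LinearMap.comp_assoc, ← g'.comm_b', ← LinearMap.comp_assoc, hμ1, φ.comm_b',
      LinearMap.comp_assoc, hμ2]
  exact ⟨KHom.ofLin μ1 μ2 ca cb, by simpa using hμ1, by simpa using hμ2⟩

/-- Factorization of a `KHom` through a monomorphism. -/
private lemma exists_hom_factor {V B W : KRep k} (f : KHom B W) (φ : KHom V W) (hf : f.Mono)
    (h1 : LinearMap.range φ.f1.mulVecLin ≤ LinearMap.range f.f1.mulVecLin)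
    (h2 : LinearMap.range φ.f2.mulVecLin ≤ LinearMap.range f.f2.mulVecLin) :
    ∃ ψ : KHom V B, f.f1.mulVecLin ∘ₗ ψ.f1.mulVecLin = φ.f1.mulVecLin ∧
      f.f2.mulVecLin ∘ₗ ψ.f2.mulVecLin = φ.f2.mulVecLin := by
  obtain ⟨ψ1, hψ1⟩ := exists_lin_factor f.f1.mulVecLin φ.f1.mulVecLin hf.1 h1
  obtain ⟨ψ2, hψ2⟩ := exists_lin_factor f.f2.mulVecLin φ.f2.mulVecLin hf.2 h2
  have ca : ψ1 ∘ₗ V.A.mulVecLin = B.A.mulVecLin ∘ₗ ψ2 := by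
    rw [← LinearMap.cancel_left hf.1, ← LinearMap.comp_assoc, hψ1, φ.comm_a', ← hψ2,
      ← LinearMap.comp_assoc, ← f.comm_a', LinearMap.comp_assoc]
  have cb : ψ1 ∘ₗ V.B.mulVecLin = B.B.mulVecLin ∘ₗ ψ2 := by
    rw [← LinearMap.cancel_left hf.1, ← LinearMap.comp_assoc, hψ1, φ.comm_b', ← hψ2,
      ← LinearMap.comp_assoc, ← f.comm_b', LinearMap.comp_assoc]
  exact ⟨KHom.ofLin ψ1 ψ2 ca cb, by simpa using hψ1, by simpa using hψ2⟩

end Aux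

/-- Associativity of the extension monoid product on sets of isomorphism
classes of Kronecker representations of fixed dimension vectors. -/
theorem extProd_assoc (d e f : ℕ × ℕ) (𝒜 ℬ 𝒞 : Set (KRep k))
    (hA : IsoClosed 𝒜) (hB : IsoClosed ℬ) (hC : IsoClosed 𝒞)
    (hdA : ∀ X ∈ 𝒜, (X.d1, X.d2) = d) (hdB : ∀ X ∈ ℬ, (X.d1, X.d2) = e)
    (hdC : ∀ X ∈ 𝒞, (X.d1, X.d2) = f) :
    ExtProd (ExtProd 𝒜 ℬ) 𝒞 = ExtProd 𝒜 (ExtProd ℬ 𝒞) := by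
  ext Y
  simp only [ExtProd, Set.mem_setOf_eq]
  constructor
  · -- LHS → RHS
    rintro ⟨W, ⟨A, hAm, B, hBm, fB, gW, hfB, hgW, eBW1, eBW2⟩, C, hCm, fC, gY, hfC, hgY, eCY1, eCY2⟩
    -- fB : B → W mono, gW : W → A epi; fC : C → Y mono, gY : Y → W epi
    set h : KHom Y A := gW.comp gY with hh
    have hepi : h.Epi := by
      constructor
      · rw [hh, KHom.comp_f1, LinearMap.coe_comp]; exact hgW.1.comp hgY.1
      · rw [hh, KHom.comp_f2, LinearMap.coe_comp]; exact hgW.2.comp hgY.2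
    have hsa : ∀ x ∈ LinearMap.ker h.f2.mulVecLin, Y.A.mulVecLin x ∈ LinearMap.ker h.f1.mulVecLin := by
      intro x hx
      rw [LinearMap.mem_ker] at hx ⊢
      have hc := LinearMap.congr_fun h.comm_a' x
      simp only [LinearMap.comp_apply] at hc
      rw [hc, hx, map_zero]
    have hsb : ∀ x ∈ LinearMap.ker h.f2.mulVecLin, Y.B.mulVecLin x ∈ LinearMap.ker h.f1.mulVecLin := by
      intro x hx
      rw [LinearMap.mem_ker] at hx ⊢
      have hc := LinearMap.congr_fun h.comm_b' x
      simp only [LinearMap.comp_apply] at hc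
      rw [hc, hx, map_zero]
    set V : KRep k := Y.sub _ _ hsa hsb with hV
    set incl : KHom V Y := Y.incl _ _ hsa hsb with hincl
    have hinclm : incl.Mono := Y.incl_mono _ _ hsa hsb
    have hri1 : LinearMap.range incl.f1.mulVecLin = LinearMap.ker h.f1.mulVecLin :=
      Y.range_incl_f1 _ _ hsa hsb
    have hri2 : LinearMap.range incl.f2.mulVecLin = LinearMap.ker h.f2.mulVecLin :=
      Y.range_incl_f2 _ _ hsa hsb
    have hker1 : LinearMap.ker h.f1.mulVecLin
        = Submodule.comap gY.f1.mulVecLin (LinearMap.ker gW.f1.mulVecLin) := by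
      rw [hh, KHom.comp_f1, LinearMap.ker_comp]
    have hker2 : LinearMap.ker h.f2.mulVecLin
        = Submodule.comap gY.f2.mulVecLin (LinearMap.ker gW.f2.mulVecLin) := by
      rw [hh, KHom.comp_f2, LinearMap.ker_comp]
    set φ : KHom V W := gY.comp incl with hφ
    have hrφ1 : LinearMap.range φ.f1.mulVecLin = LinearMap.range fB.f1.mulVecLin := by
      rw [hφ, KHom.comp_f1, LinearMap.range_comp, hri1, hker1, Submodule.map_comap_eq,
        LinearMap.range_eq_top.2 hgY.1, top_inf_eq, eBW1]
    have hrφ2 : LinearMap.range φ.f2.mulVecLin = LinearMap.range fB.f2.mulVecLin := by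
      rw [hφ, KHom.comp_f2, LinearMap.range_comp, hri2, hker2, Submodule.map_comap_eq,
        LinearMap.range_eq_top.2 hgY.2, top_inf_eq, eBW2]
    obtain ⟨ψ, hψ1, hψ2⟩ := exists_hom_factor fB φ hfB hrφ1.le hrφ2.le
    have hψe : ψ.Epi := by
      constructor
      · have hr : LinearMap.range ψ.f1.mulVecLin = ⊤ := by
          apply Submodule.map_injective_of_injective hfB.1
          rw [Submodule.map_top, ← LinearMap.range_comp, hψ1, hrφ1]
        exact LinearMap.range_eq_top.1 hr
      · have hr : LinearMap.range ψ.f2.mulVecLin = ⊤ := by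
          apply Submodule.map_injective_of_injective hfB.2
          rw [Submodule.map_top, ← LinearMap.range_comp, hψ2, hrφ2]
        exact LinearMap.range_eq_top.1 hr
    have hcr1 : LinearMap.range fC.f1.mulVecLin ≤ LinearMap.range incl.f1.mulVecLin := by
      rw [hri1, hker1, eCY1]
      intro x hx
      rw [LinearMap.mem_ker] at hx
      exact Submodule.mem_comap.mpr (by rw [LinearMap.mem_ker, hx, map_zero])
    have hcr2 : LinearMap.range fC.f2.mulVecLin ≤ LinearMap.range incl.f2.mulVecLin := by
      rw [hri2, hker2, eCY2]
      intro x hx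
      rw [LinearMap.mem_ker] at hx
      exact Submodule.mem_comap.mpr (by rw [LinearMap.mem_ker, hx, map_zero])
    obtain ⟨cor, hcor1, hcor2⟩ := exists_hom_factor incl fC hinclm hcr1 hcr2
    have hcorm : cor.Mono := by
      constructor
      · have hi : Function.Injective (incl.f1.mulVecLin ∘ cor.f1.mulVecLin) := by
          rw [← LinearMap.coe_comp, hcor1]; exact hfC.1
        exact hi.of_comp
      · have hi : Function.Injective (incl.f2.mulVecLin ∘ cor.f2.mulVecLin) := by
          rw [← LinearMap.coe_comp, hcor2]; exact hfC.2
        exact hi.of_comp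
    have hex1 : LinearMap.range cor.f1.mulVecLin = LinearMap.ker ψ.f1.mulVecLin := by
      have hkψ : LinearMap.ker ψ.f1.mulVecLin = LinearMap.ker φ.f1.mulVecLin := by
        conv_rhs => rw [← hψ1]
        rw [LinearMap.ker_comp, LinearMap.ker_eq_bot.2 hfB.1, Submodule.comap_bot]
      have hkφ : LinearMap.ker φ.f1.mulVecLin
          = Submodule.comap incl.f1.mulVecLin (LinearMap.range fC.f1.mulVecLin) := by
        rw [hφ, KHom.comp_f1, LinearMap.ker_comp, eCY1]
      have hrc : Submodule.comap incl.f1.mulVecLin (LinearMap.range fC.f1.mulVecLin)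
          = LinearMap.range cor.f1.mulVecLin := by
        rw [← hcor1, LinearMap.range_comp, Submodule.comap_map_eq,
          LinearMap.ker_eq_bot.2 hinclm.1, sup_bot_eq]
      rw [hkψ, hkφ, hrc]
    have hex2 : LinearMap.range cor.f2.mulVecLin = LinearMap.ker ψ.f2.mulVecLin := by
      have hkψ : LinearMap.ker ψ.f2.mulVecLin = LinearMap.ker φ.f2.mulVecLin := by
        conv_rhs => rw [← hψ2]
        rw [LinearMap.ker_comp, LinearMap.ker_eq_bot.2 hfB.2, Submodule.comap_bot]
      have hkφ : LinearMap.ker φ.f2.mulVecLin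
          = Submodule.comap incl.f2.mulVecLin (LinearMap.range fC.f2.mulVecLin) := by
        rw [hφ, KHom.comp_f2, LinearMap.ker_comp, eCY2]
      have hrc : Submodule.comap incl.f2.mulVecLin (LinearMap.range fC.f2.mulVecLin)
          = LinearMap.range cor.f2.mulVecLin := by
        rw [← hcor2, LinearMap.range_comp, Submodule.comap_map_eq,
          LinearMap.ker_eq_bot.2 hinclm.2, sup_bot_eq]
      rw [hkψ, hkφ, hrc]
    exact ⟨A, hAm, V, ⟨B, hBm, C, hCm, cor, ψ, hcorm, hψe, hex1, hex2⟩,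
      incl, h, hinclm, hepi, hri1, hri2⟩
  · -- RHS → LHS
    rintro ⟨A, hAm, V, ⟨B, hBm, C, hCm, fC, gB, hfC, hgB, eCV1, eCV2⟩, fV, gA, hfV, hgA, eVY1, eVY2⟩
    -- fC : C → V mono, gB : V → B epi; fV : V → Y mono, gA : Y → A epi
    set ff' : KHom C Y := fV.comp fC with hff'
    have hff'm : ff'.Mono := by
      constructor
      · rw [hff', KHom.comp_f1, LinearMap.coe_comp]; exact hfV.1.comp hfC.1
      · rw [hff', KHom.comp_f2, LinearMap.coe_comp]; exact hfV.2.comp hfC.2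
    have hqa : LinearMap.range ff'.f2.mulVecLin
        ≤ Submodule.comap Y.A.mulVecLin (LinearMap.range ff'.f1.mulVecLin) := by
      rintro x ⟨c, rfl⟩
      refine Submodule.mem_comap.mpr ⟨C.A.mulVecLin c, ?_⟩
      have hc := LinearMap.congr_fun ff'.comm_a' c
      simpa using hc
    have hqb : LinearMap.range ff'.f2.mulVecLin
        ≤ Submodule.comap Y.B.mulVecLin (LinearMap.range ff'.f1.mulVecLin) := by
      rintro x ⟨c, rfl⟩
      refine Submodule.mem_comap.mpr ⟨C.B.mulVecLin c, ?_⟩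
      have hc := LinearMap.congr_fun ff'.comm_b' c
      simpa using hc
    set W : KRep k := Y.quot _ _ hqa hqb with hW
    set proj : KHom Y W := Y.proj _ _ hqa hqb with hproj
    have hprojE : proj.Epi := Y.proj_epi _ _ hqa hqb
    have hkp1 : LinearMap.ker proj.f1.mulVecLin = LinearMap.range ff'.f1.mulVecLin :=
      Y.ker_proj_f1 _ _ hqa hqb
    have hkp2 : LinearMap.ker proj.f2.mulVecLin = LinearMap.range ff'.f2.mulVecLin :=
      Y.ker_proj_f2 _ _ hqa hqb
    set h : KHom V W := proj.comp fV with hh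
    have hk1 : LinearMap.ker gB.f1.mulVecLin ≤ LinearMap.ker h.f1.mulVecLin := by
      rw [← eCV1, hh, KHom.comp_f1, LinearMap.ker_comp, hkp1]
      rintro x ⟨c, rfl⟩
      exact Submodule.mem_comap.mpr ⟨c, by rw [hff', KHom.comp_f1]; rfl⟩
    have hk2 : LinearMap.ker gB.f2.mulVecLin ≤ LinearMap.ker h.f2.mulVecLin := by
      rw [← eCV2, hh, KHom.comp_f2, LinearMap.ker_comp, hkp2]
      rintro x ⟨c, rfl⟩
      exact Submodule.mem_comap.mpr ⟨c, by rw [hff', KHom.comp_f2]; rfl⟩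
    obtain ⟨μ, hμ1, hμ2⟩ := exists_hom_lift gB h hgB hk1 hk2
    have hμm : μ.Mono := by
      constructor
      · rw [← LinearMap.ker_eq_bot, Submodule.eq_bot_iff]
        intro b hb
        rw [LinearMap.mem_ker] at hb
        obtain ⟨v, rfl⟩ := hgB.1 b
        have hv : h.f1.mulVecLin v = 0 := by
          have hc := LinearMap.congr_fun hμ1 v
          simp only [LinearMap.comp_apply] at hc
          rw [← hc]; exact hb
        rw [hh, KHom.comp_f1] at hv
        simp only [LinearMap.comp_apply] at hv
        have hmem : fV.f1.mulVecLin v ∈ LinearMap.ker proj.f1.mulVecLin := hv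
        rw [hkp1, hff', KHom.comp_f1] at hmem
        obtain ⟨c, hc⟩ := hmem
        simp only [LinearMap.comp_apply] at hc
        have hveq : fC.f1.mulVecLin c = v := hfV.1 hc
        have : v ∈ LinearMap.ker gB.f1.mulVecLin := by
          rw [← eCV1]; exact ⟨c, hveq⟩
        rwa [LinearMap.mem_ker] at this
      · rw [← LinearMap.ker_eq_bot, Submodule.eq_bot_iff]
        intro b hb
        rw [LinearMap.mem_ker] at hb
        obtain ⟨v, rfl⟩ := hgB.2 b
        have hv : h.f2.mulVecLin v = 0 := by
          have hc := LinearMap.congr_fun hμ2 v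
          simp only [LinearMap.comp_apply] at hc
          rw [← hc]; exact hb
        rw [hh, KHom.comp_f2] at hv
        simp only [LinearMap.comp_apply] at hv
        have hmem : fV.f2.mulVecLin v ∈ LinearMap.ker proj.f2.mulVecLin := hv
        rw [hkp2, hff', KHom.comp_f2] at hmem
        obtain ⟨c, hc⟩ := hmem
        simp only [LinearMap.comp_apply] at hc
        have hveq : fC.f2.mulVecLin c = v := hfV.2 hc
        have : v ∈ LinearMap.ker gB.f2.mulVecLin := by
          rw [← eCV2]; exact ⟨c, hveq⟩
        rwa [LinearMap.mem_ker] at this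
    have hkpg1 : LinearMap.ker proj.f1.mulVecLin ≤ LinearMap.ker gA.f1.mulVecLin := by
      rw [hkp1, ← eVY1, hff', KHom.comp_f1]
      rintro x ⟨c, rfl⟩
      exact ⟨fC.f1.mulVecLin c, rfl⟩
    have hkpg2 : LinearMap.ker proj.f2.mulVecLin ≤ LinearMap.ker gA.f2.mulVecLin := by
      rw [hkp2, ← eVY2, hff', KHom.comp_f2]
      rintro x ⟨c, rfl⟩
      exact ⟨fC.f2.mulVecLin c, rfl⟩
    obtain ⟨ν, hν1, hν2⟩ := exists_hom_lift proj gA hprojE hkpg1 hkpg2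
    have hνe : ν.Epi := by
      constructor
      · have hs : Function.Surjective (ν.f1.mulVecLin ∘ proj.f1.mulVecLin) := by
          rw [← LinearMap.coe_comp, hν1]; exact hgA.1
        exact hs.of_comp
      · have hs : Function.Surjective (ν.f2.mulVecLin ∘ proj.f2.mulVecLin) := by
          rw [← LinearMap.coe_comp, hν2]; exact hgA.2
        exact hs.of_comp
    have hex1 : LinearMap.range μ.f1.mulVecLin = LinearMap.ker ν.f1.mulVecLin := by
      have hrμ : LinearMap.range μ.f1.mulVecLin = LinearMap.range h.f1.mulVecLin := by
        rw [← hμ1, LinearMap.range_comp, LinearMap.range_eq_top.2 hgB.1, Submodule.map_top]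
      have hkν : LinearMap.ker ν.f1.mulVecLin
          = Submodule.map proj.f1.mulVecLin (LinearMap.ker gA.f1.mulVecLin) := by
        apply le_antisymm
        · intro w hw
          obtain ⟨y, rfl⟩ := hprojE.1 w
          refine ⟨y, ?_, rfl⟩
          simp only [SetLike.mem_coe, LinearMap.mem_ker] at hw ⊢
          have hc := LinearMap.congr_fun hν1 y
          simp only [LinearMap.comp_apply] at hc
          rw [← hc]; exact hw
        · rintro w ⟨y, hy, rfl⟩
          simp only [SetLike.mem_coe, LinearMap.mem_ker] at hy ⊢
          have hc := LinearMap.congr_fun hν1 y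
          simp only [LinearMap.comp_apply] at hc
          rw [hc, hy]
      rw [hrμ, hkν, ← eVY1, hh, KHom.comp_f1, LinearMap.range_comp]
    have hex2 : LinearMap.range μ.f2.mulVecLin = LinearMap.ker ν.f2.mulVecLin := by
      have hrμ : LinearMap.range μ.f2.mulVecLin = LinearMap.range h.f2.mulVecLin := by
        rw [← hμ2, LinearMap.range_comp, LinearMap.range_eq_top.2 hgB.2, Submodule.map_top]
      have hkν : LinearMap.ker ν.f2.mulVecLin
          = Submodule.map proj.f2.mulVecLin (LinearMap.ker gA.f2.mulVecLin) := by
        apply le_antisymm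
        · intro w hw
          obtain ⟨y, rfl⟩ := hprojE.2 w
          refine ⟨y, ?_, rfl⟩
          simp only [SetLike.mem_coe, LinearMap.mem_ker] at hw ⊢
          have hc := LinearMap.congr_fun hν2 y
          simp only [LinearMap.comp_apply] at hc
          rw [← hc]; exact hw
        · rintro w ⟨y, hy, rfl⟩
          simp only [SetLike.mem_coe, LinearMap.mem_ker] at hy ⊢
          have hc := LinearMap.congr_fun hν2 y
          simp only [LinearMap.comp_apply] at hc
          rw [hc, hy]
      rw [hrμ, hkν, ← eVY2, hh, KHom.comp_f2, LinearMap.range_comp]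
    exact ⟨W, ⟨A, hAm, B, hBm, μ, ν, hμm, hνe, hex1, hex2⟩,
      C, hCm, ff', proj, hff'm, hprojE, hkp1.symm, hkp2.symm⟩
end

section
/- A matrix pencil A′ + λB′ of size m′×n′ over a field k is a subpencil of a pencil A + λB of size m×n (i.e., A + λB is strictly equivalent to a block matrix with A′ + λB′ as top-left block) if and only if m ≥ m′, n ≥ n′ and there exists a Kronecker representation L fitting into short exact sequences 0 → M_{A′,B′} → L → (n−n′)I₀ → 0 and 0 → (m−m′)P₀ → M_{A,B} → L → 0. -/
open Matrix Finset

variable {k : Type} [Field k]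

/-- The Kronecker representation associated to a matrix pencil `A + λB`. -/
def pencilRep {m n : ℕ} (A B : Matrix (Fin m) (Fin n) k) : KRep k := ⟨m, n, A, B⟩

/-- Strict equivalence of matrix pencils: `P (A' + λB') Q = A + λB` for
invertible constant matrices `P`, `Q`. -/
def StrictEquiv {m n : ℕ} (A B A' B' : Matrix (Fin m) (Fin n) k) : Prop :=
  ∃ (P : GL (Fin m) k) (Q : GL (Fin n) k),
    (P : Matrix (Fin m) (Fin m) k) * A' * (Q : Matrix (Fin n) (Fin n) k) = A ∧
    (P : Matrix (Fin m) (Fin m) k) * B' * (Q : Matrix (Fin n) (Fin n) k) = B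

/-- `A' + λB'` is a subpencil of `A + λB`: the latter is strictly equivalent
to a block pencil with `A' + λB'` as top-left block. -/
def IsSubpencil {m' n' m n : ℕ} (A' B' : Matrix (Fin m') (Fin n') k)
    (A B : Matrix (Fin m) (Fin n) k) : Prop :=
  ∃ (m₂ n₂ : ℕ) (hm : m = m' + m₂) (hn : n = n' + n₂)
    (A12 B12 : Matrix (Fin m') (Fin n₂) k)
    (A21 B21 : Matrix (Fin m₂) (Fin n') k)
    (A22 B22 : Matrix (Fin m₂) (Fin n₂) k),
    StrictEquiv A B
      (Matrix.reindex (finSumFinEquiv.trans (finCongr hm.symm))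
        (finSumFinEquiv.trans (finCongr hn.symm)) (Matrix.fromBlocks A' A12 A21 A22))
      (Matrix.reindex (finSumFinEquiv.trans (finCongr hm.symm))
        (finSumFinEquiv.trans (finCongr hn.symm)) (Matrix.fromBlocks B' B12 B21 B22))

namespace PencilAux

variable {k : Type} [Field k]

/-- projection matrix: `mulVec` is `v ↦ v ∘ φ`. -/
def projM {a b : ℕ} (φ : Fin a → Fin b) : Matrix (Fin a) (Fin b) k :=
  Matrix.of fun i j => if φ i = j then 1 else 0

/-- inclusion matrix: transpose of `projM`. -/
def inclM {a b : ℕ} (φ : Fin a → Fin b) : Matrix (Fin b) (Fin a) k :=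
  Matrix.of fun i j => if i = φ j then 1 else 0

lemma projM_mulVec {a b : ℕ} (φ : Fin a → Fin b) (v : Fin b → k) :
    (projM φ).mulVec v = v ∘ φ := by
  funext i
  simp [projM, Matrix.mulVec, dotProduct, ite_mul]

lemma projM_mul {a b c : ℕ} (φ : Fin a → Fin b) (M : Matrix (Fin b) (Fin c) k) :
    projM (k := k) φ * M = M.submatrix φ id := by
  ext i j
  simp [projM, Matrix.mul_apply, ite_mul]

lemma mul_inclM {c a b : ℕ} (M : Matrix (Fin c) (Fin b) k) (φ : Fin a → Fin b) :
    M * inclM (k := k) φ = M.submatrix id φ := by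
  ext i j
  simp [inclM, Matrix.mul_apply, mul_ite]

lemma inclM_mulVec_apply {a b : ℕ} {φ : Fin a → Fin b} (hφ : Function.Injective φ)
    (u : Fin a → k) (j : Fin a) : (inclM (k := k) φ).mulVec u (φ j) = u j := by
  simp [inclM, Matrix.mulVec, dotProduct, hφ.eq_iff, ite_mul]

lemma inclM_mulVec_of_ne {a b : ℕ} {φ : Fin a → Fin b} {x : Fin b}
    (hx : ∀ j, x ≠ φ j) (u : Fin a → k) : (inclM (k := k) φ).mulVec u x = 0 := by
  simp only [inclM, Matrix.mulVec, dotProduct, Matrix.of_apply]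
  exact Finset.sum_eq_zero fun j _ => by rw [if_neg (hx j), zero_mul]

lemma inclM_injective {a b : ℕ} {φ : Fin a → Fin b} (hφ : Function.Injective φ) :
    Function.Injective (inclM (k := k) φ).mulVecLin := by
  intro u u' h
  funext j
  have := congrFun h (φ j)
  simpa only [Matrix.mulVecLin_apply, inclM_mulVec_apply hφ] using this

lemma projM_surjective {a b : ℕ} {φ : Fin a → Fin b} (hφ : Function.Injective φ) :
    Function.Surjective (projM (k := k) φ).mulVecLin := by
  intro w
  refine ⟨fun x => if h : ∃ i, φ i = x then w h.choose else 0, ?_⟩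
  rw [Matrix.mulVecLin_apply, projM_mulVec]
  funext i
  have hex : ∃ t, φ t = φ i := ⟨i, rfl⟩
  simp only [Function.comp_apply, dif_pos hex]
  congr 1
  exact hφ hex.choose_spec

lemma range_inclM_eq_ker_projM {a b c : ℕ} {φ : Fin a → Fin c} {ψ : Fin b → Fin c}
    (hφ : Function.Injective φ) (hdisj : ∀ i j, φ i ≠ ψ j)
    (hsplit : ∀ x, (∃ i, φ i = x) ∨ ∃ j, ψ j = x) :
    LinearMap.range (inclM (k := k) φ).mulVecLin
      = LinearMap.ker (projM (k := k) ψ).mulVecLin := by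
  ext v
  simp only [LinearMap.mem_range, LinearMap.mem_ker, Matrix.mulVecLin_apply, projM_mulVec]
  constructor
  · rintro ⟨u, rfl⟩
    funext j
    exact inclM_mulVec_of_ne (fun i => Ne.symm (hdisj i j)) u
  · intro hv
    refine ⟨v ∘ φ, ?_⟩
    funext x
    rcases hsplit x with ⟨i, rfl⟩ | ⟨j, rfl⟩
    · exact inclM_mulVec_apply hφ _ i
    · rw [inclM_mulVec_of_ne (fun i h => (hdisj i j) h.symm) _]
      exact (congrFun hv j).symm

lemma matrix_eq_of_mulVec_eq {a b : ℕ} {X Y : Matrix (Fin a) (Fin b) k}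
    (h : ∀ v, X.mulVec v = Y.mulVec v) : X = Y := by
  ext i j
  have := congrFun (h (Pi.single j 1)) i
  simpa using this

lemma mul_left_cancel_of_inj {a b c : ℕ} {M : Matrix (Fin a) (Fin b) k}
    (hM : Function.Injective M.mulVecLin)
    {X Y : Matrix (Fin b) (Fin c) k} (h : M * X = M * Y) : X = Y := by
  refine matrix_eq_of_mulVec_eq fun v => hM ?_
  simp only [Matrix.mulVecLin_apply, Matrix.mulVec_mulVec, h]

lemma mul_eq_zero_of_range_le_ker {a b c : ℕ} {M : Matrix (Fin b) (Fin c) k}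
    {N : Matrix (Fin c) (Fin a) k}
    (h : LinearMap.range N.mulVecLin ≤ LinearMap.ker M.mulVecLin) : M * N = 0 := by
  ext i j
  have h0 : M.mulVec (N.mulVec (Pi.single j 1)) = 0 := h ⟨Pi.single j 1, rfl⟩
  have : (M * N).mulVec (Pi.single j 1) = 0 := by rw [← Matrix.mulVec_mulVec]; exact h0
  have := congrFun this i
  simpa using this

lemma unit_mulVec_inv_cancel {r : ℕ} (u : (Matrix (Fin r) (Fin r) k)ˣ) (x : Fin r → k) :
    (↑u : Matrix (Fin r) (Fin r) k).mulVec ((↑u⁻¹ : Matrix (Fin r) (Fin r) k).mulVec x) = x := by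
  rw [Matrix.mulVec_mulVec, Units.mul_inv, Matrix.one_mulVec]

lemma unit_inv_mulVec_cancel {r : ℕ} (u : (Matrix (Fin r) (Fin r) k)ˣ) (x : Fin r → k) :
    (↑u⁻¹ : Matrix (Fin r) (Fin r) k).mulVec ((↑u : Matrix (Fin r) (Fin r) k).mulVec x) = x := by
  rw [Matrix.mulVec_mulVec, Units.inv_mul, Matrix.one_mulVec]

lemma unit_bij {r : ℕ} (u : (Matrix (Fin r) (Fin r) k)ˣ) :
    Function.Bijective ((↑u : Matrix (Fin r) (Fin r) k)).mulVecLin := by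
  constructor
  · intro x y h
    have := congrArg ((↑u⁻¹ : Matrix (Fin r) (Fin r) k).mulVec) h
    simpa only [Matrix.mulVecLin_apply, unit_inv_mulVec_cancel] using this
  · intro y
    exact ⟨(↑u⁻¹ : Matrix (Fin r) (Fin r) k).mulVec y, unit_mulVec_inv_cancel u y⟩

lemma isUnit_of_injective {r : ℕ} {M : Matrix (Fin r) (Fin r) k}
    (h : Function.Injective M.mulVecLin) : IsUnit M :=
  Matrix.mulVec_injective_iff_isUnit.mp (by
    intro x y hxy
    exact h (show M.mulVecLin x = M.mulVecLin y by simpa using hxy))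


lemma exists_unit {d a b e : ℕ} (ε : Fin a ⊕ Fin b ≃ Fin d)
    (D : Matrix (Fin e) (Fin d) k) (C : Matrix (Fin d) (Fin a) k)
    (E : Matrix (Fin e) (Fin b) k)
    (hD : Function.Surjective D.mulVecLin) (hC : Function.Injective C.mulVecLin)
    (hE : Function.Injective E.mulVecLin) (hDC : D * C = 0) :
    ∃ W : Matrix (Fin d) (Fin d) k, IsUnit W ∧
      D * W = E * (projM (k := k) (⇑ε ∘ Sum.inr) : Matrix (Fin b) (Fin d) k) ∧ W * inclM (k := k) (⇑ε ∘ Sum.inl) = C := by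
  have hsec : ∀ i : Fin b, ∃ w, D.mulVec w = E.mulVec (Pi.single i 1) := fun i => by
    obtain ⟨w, hw⟩ := hD (E.mulVec (Pi.single i 1))
    exact ⟨w, by simpa using hw⟩
  set sec : Fin b → Fin d → k := fun i => (hsec i).choose with hsecdef
  have hsecp : ∀ i, D.mulVec (sec i) = E.mulVec (Pi.single i 1) := fun i => (hsec i).choose_spec
  set W : Matrix (Fin d) (Fin d) k :=
    Matrix.of (fun r c => Sum.elim (fun j => C r j) (fun i => sec i r) (ε.symm c)) with hW
  have hincl : W * inclM (k := k) (⇑ε ∘ Sum.inl) = C := by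
    rw [mul_inclM]
    ext r j
    simp [hW]
  have hDW : D * W = E * (projM (k := k) (⇑ε ∘ Sum.inr) : Matrix (Fin b) (Fin d) k) := by
    ext r c
    have hL : (D * W) r c = D.mulVec (fun t => W t c) r := by
      simp [Matrix.mul_apply, Matrix.mulVec, dotProduct]
    have hR : (E * (projM (k := k) (⇑ε ∘ Sum.inr) : Matrix (Fin b) (Fin d) k)) r c
        = ∑ t, E r t * (if Sum.inr t = ε.symm c then 1 else 0) := by
      simp only [Matrix.mul_apply, projM, Matrix.of_apply, Function.comp_apply]
      refine Finset.sum_congr rfl fun t _ => ?_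
      simp only [Equiv.apply_eq_iff_eq_symm_apply]
    rcases hsc : ε.symm c with j | i
    · have hcol : (fun t => W t c) = fun t => C t j := by
        funext t; simp [hW, hsc]
      have h0 : D.mulVec (fun t => C t j) = (fun r' => (D * C) r' j) := by
        funext r'; simp [Matrix.mul_apply, Matrix.mulVec, dotProduct]
      rw [hL, hcol, h0, hDC, hR, hsc]
      simp
    · have hcol : (fun t => W t c) = sec i := by
        funext t; simp [hW, hsc]
      rw [hL, hcol, hsecp i, hR, hsc]
      simp [Matrix.mulVec_single]
  have hker : ∀ v, W.mulVec v = 0 → v = 0 := by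
    intro v hv
    have h1 : E.mulVec ((projM (⇑ε ∘ Sum.inr)).mulVec v) = 0 := by
      rw [Matrix.mulVec_mulVec, ← hDW, ← Matrix.mulVec_mulVec, hv, Matrix.mulVec_zero]
    have h2 : (projM (k := k) (⇑ε ∘ Sum.inr)).mulVec v = 0 := by
      apply hE
      simp only [Matrix.mulVecLin_apply, h1, Matrix.mulVec_zero]
    have h3 : ∀ i, v (ε (Sum.inr i)) = 0 := by
      intro i
      rw [projM_mulVec] at h2
      exact congrFun h2 i
    have h4 : W.mulVec v = C.mulVec (fun j => v (ε (Sum.inl j))) := by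
      funext r
      have : W.mulVec v r = ∑ s : Fin a ⊕ Fin b, W r (ε s) * v (ε s) := by
        rw [show W.mulVec v r = ∑ c, W r c * v c from rfl]
        exact (Equiv.sum_comp ε (fun c => W r c * v c)).symm
      rw [this, Fintype.sum_sum_type]
      simp only [hW, Matrix.of_apply, Equiv.symm_apply_apply, Sum.elim_inl, Sum.elim_inr]
      have hz : ∑ i : Fin b, sec i r * v (ε (Sum.inr i)) = 0 :=
        Finset.sum_eq_zero fun i _ => by rw [h3 i, mul_zero]
      rw [hz, add_zero]
      rfl
    have h5 : (fun j => v (ε (Sum.inl j))) = 0 := by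
      apply hC
      simp only [Matrix.mulVecLin_apply, ← h4, hv, Matrix.mulVec_zero]
    funext c
    rcases hsc : ε.symm c with j | i
    · have : c = ε (Sum.inl j) := by rw [← hsc, Equiv.apply_symm_apply]
      rw [this]; exact congrFun h5 j
    · have : c = ε (Sum.inr i) := by rw [← hsc, Equiv.apply_symm_apply]
      rw [this]; exact h3 i
  have hinj : Function.Injective W.mulVecLin := by
    intro x y hxy
    have : W.mulVec (x - y) = 0 := by
      rw [Matrix.mulVec_sub]
      simpa only [Matrix.mulVecLin_apply, sub_eq_zero] using hxy
    exact sub_eq_zero.mp (hker _ this)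
  exact ⟨W, isUnit_of_injective hinj, hDW, hincl⟩

end PencilAux


namespace PencilAux

variable {k : Type} [Field k]

lemma mul_submatrix_id {a b c d : ℕ} (M : Matrix (Fin a) (Fin b) k)
    (N : Matrix (Fin b) (Fin c) k) (ψ : Fin d → Fin c) :
    M * N.submatrix id ψ = (M * N).submatrix id ψ := by
  ext r c
  simp [Matrix.mul_apply, Matrix.submatrix_apply]

lemma bij_of_mul_eq_one {a b : ℕ} {X : Matrix (Fin a) (Fin b) k}
    {Y : Matrix (Fin b) (Fin a) k} (h1 : X * Y = 1) (h2 : Y * X = 1) :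
    Function.Bijective X.mulVecLin := by
  constructor
  · intro u v huv
    have h := congrArg Y.mulVec huv
    simpa only [Matrix.mulVecLin_apply, Matrix.mulVec_mulVec, h2, Matrix.one_mulVec] using h
  · intro y
    refine ⟨Y.mulVec y, ?_⟩
    rw [Matrix.mulVecLin_apply, Matrix.mulVec_mulVec, h1, Matrix.one_mulVec]

lemma unit_inv_mul_cancel_left {r c : ℕ} (u : (Matrix (Fin r) (Fin r) k)ˣ)
    (X : Matrix (Fin r) (Fin c) k) :
    (↑u⁻¹ : Matrix (Fin r) (Fin r) k) * ((↑u : Matrix (Fin r) (Fin r) k) * X) = X := by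
  rw [← Matrix.mul_assoc, Units.inv_mul, Matrix.one_mul]

lemma unit_mul_inv_cancel_left {r c : ℕ} (u : (Matrix (Fin r) (Fin r) k)ˣ)
    (X : Matrix (Fin r) (Fin c) k) :
    (↑u : Matrix (Fin r) (Fin r) k) * ((↑u⁻¹ : Matrix (Fin r) (Fin r) k) * X) = X := by
  rw [← Matrix.mul_assoc, Units.mul_inv, Matrix.one_mul]

lemma unit_mul_inv_cancel_right {r c : ℕ} (u : (Matrix (Fin r) (Fin r) k)ˣ)
    (X : Matrix (Fin c) (Fin r) k) :
    X * (↑u : Matrix (Fin r) (Fin r) k) * (↑u⁻¹ : Matrix (Fin r) (Fin r) k) = X := by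
  rw [Matrix.mul_assoc, Units.mul_inv, Matrix.mul_one]

lemma dsumList_replicate_d1 (X : KRep k) (r : ℕ) :
    (KRep.dsumList (List.replicate r X)).d1 = r * X.d1 := by
  induction r with
  | zero => simp [KRep.dsumList, KRep.zero]
  | succ r ih =>
    show X.d1 + (KRep.dsumList (List.replicate r X)).d1 = (r + 1) * X.d1
    rw [ih]; ring

lemma dsumList_replicate_d2 (X : KRep k) (r : ℕ) :
    (KRep.dsumList (List.replicate r X)).d2 = r * X.d2 := by
  induction r with
  | zero => simp [KRep.dsumList, KRep.zero]
  | succ r ih =>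
    show X.d2 + (KRep.dsumList (List.replicate r X)).d2 = (r + 1) * X.d2
    rw [ih]; ring

lemma inj0_d1 (r : ℕ) : (KRep.dsumList (List.replicate r (KRep.Inj k 0))).d1 = 0 := by
  rw [dsumList_replicate_d1]; rfl

lemma inj0_d2 (r : ℕ) : (KRep.dsumList (List.replicate r (KRep.Inj k 0))).d2 = r := by
  rw [dsumList_replicate_d2]; show r * 1 = r; ring

lemma p0_d1 (r : ℕ) : (KRep.dsumList (List.replicate r (KRep.P k 0))).d1 = r := by
  rw [dsumList_replicate_d1]; show r * 1 = r; ring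

lemma p0_d2 (r : ℕ) : (KRep.dsumList (List.replicate r (KRep.P k 0))).d2 = 0 := by
  rw [dsumList_replicate_d2]; rfl

end PencilAux

/-- `A' + λB'` is a subpencil of `A + λB` iff `m ≥ m'`, `n ≥ n'` and there
is a linking representation `L` with `0 → M_{A',B'} → L → (n−n')I₀ → 0` and
`0 → (m−m')P₀ → M_{A,B} → L → 0`. -/
theorem subpencil_iff_linking {m' n' m n : ℕ}
    (A' B' : Matrix (Fin m') (Fin n') k) (A B : Matrix (Fin m) (Fin n) k) :
    IsSubpencil A' B' A B ↔
      m' ≤ m ∧ n' ≤ n ∧ ∃ L : KRep k,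
        SES (pencilRep A' B') L
          (KRep.dsumList (List.replicate (n - n') (KRep.Inj k 0))) ∧
        SES (KRep.dsumList (List.replicate (m - m') (KRep.P k 0)))
          (pencilRep A B) L := by
  constructor
  · rintro ⟨m₂, n₂, hm, hn, A12, B12, A21, B21, A22, B22, P, Q, hA, hB⟩
    have hm' : m' ≤ m := by omega
    have hn' : n' ≤ n := by omega
    refine ⟨hm', hn', ?_⟩
    set em : Fin m' ⊕ Fin m₂ ≃ Fin m := finSumFinEquiv.trans (finCongr hm.symm) with hemdef
    set en : Fin n' ⊕ Fin n₂ ≃ Fin n := finSumFinEquiv.trans (finCongr hn.symm) with hendef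
    set Ablk : Matrix (Fin m) (Fin n) k :=
      Matrix.reindex em en (Matrix.fromBlocks A' A12 A21 A22) with hAblk
    set Bblk : Matrix (Fin m) (Fin n) k :=
      Matrix.reindex em en (Matrix.fromBlocks B' B12 B21 B22) with hBblk
    set LA : Matrix (Fin m') (Fin n) k := PencilAux.projM (k := k) (⇑em ∘ Sum.inl) * Ablk with hLA
    set LB : Matrix (Fin m') (Fin n) k := PencilAux.projM (k := k) (⇑em ∘ Sum.inl) * Bblk with hLB
    have hI1 : (KRep.dsumList (List.replicate (n - n') (KRep.Inj k 0)) : KRep k).d1 = 0 :=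
      PencilAux.inj0_d1 _
    have hI2 : (KRep.dsumList (List.replicate (n - n') (KRep.Inj k 0)) : KRep k).d2 = n₂ := by
      rw [PencilAux.inj0_d2]; omega
    have hP1 : (KRep.dsumList (List.replicate (m - m') (KRep.P k 0)) : KRep k).d1 = m₂ := by
      rw [PencilAux.p0_d1]; omega
    have hP2 : (KRep.dsumList (List.replicate (m - m') (KRep.P k 0)) : KRep k).d2 = 0 :=
      PencilAux.p0_d2 _
    have hIempty : IsEmpty (Fin (KRep.dsumList (List.replicate (n - n') (KRep.Inj k 0)) : KRep k).d1) := by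
      rw [hI1]; infer_instance
    have hPempty : IsEmpty (Fin (KRep.dsumList (List.replicate (m - m') (KRep.P k 0)) : KRep k).d2) := by
      rw [hP2]; infer_instance
    have heninl : Function.Injective (⇑en ∘ Sum.inl) := en.injective.comp Sum.inl_injective
    have heminl : Function.Injective (⇑em ∘ Sum.inl) := em.injective.comp Sum.inl_injective
    have corner : ∀ (X11 : Matrix (Fin m') (Fin n') k) (X12 : Matrix (Fin m') (Fin n₂) k)
        (X21 : Matrix (Fin m₂) (Fin n') k) (X22 : Matrix (Fin m₂) (Fin n₂) k),
        ((Matrix.reindex em en (Matrix.fromBlocks X11 X12 X21 X22)).submatrix id (⇑en ∘ Sum.inl)).submatrix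
          (⇑em ∘ Sum.inl) id = X11 := by
      intro X11 X12 X21 X22
      ext i j
      simp [Matrix.submatrix_apply, Matrix.reindex_apply, Equiv.symm_apply_apply,
        Matrix.fromBlocks_apply₁₁]
    refine ⟨pencilRep LA LB, ?_, ?_⟩
    · -- first SES
      set ρ : Fin (KRep.dsumList (List.replicate (n - n') (KRep.Inj k 0)) : KRep k).d2 → Fin n :=
        fun i => en (Sum.inr (Fin.cast hI2 i)) with hρ
      have hρinj : Function.Injective ρ := by
        intro x y h
        have := en.injective h
        simpa [Fin.ext_iff] using this
      refine ⟨⟨(1 : Matrix (Fin m') (Fin m') k), PencilAux.inclM (⇑en ∘ Sum.inl), ?_, ?_⟩,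
        ⟨(0 : Matrix (Fin (KRep.dsumList (List.replicate (n - n') (KRep.Inj k 0)) : KRep k).d1) (Fin m') k),
          PencilAux.projM ρ, ?_, ?_⟩, ⟨?_, ?_⟩, ⟨?_, ?_⟩, ?_, ?_⟩
      · show (1 : Matrix (Fin m') (Fin m') k) * A' = LA * PencilAux.inclM (k := k) (⇑en ∘ Sum.inl)
        rw [Matrix.one_mul, hLA, Matrix.mul_assoc, PencilAux.mul_inclM, PencilAux.projM_mul, hAblk]
        exact (corner A' A12 A21 A22).symm
      · show (1 : Matrix (Fin m') (Fin m') k) * B' = LB * PencilAux.inclM (k := k) (⇑en ∘ Sum.inl)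
        rw [Matrix.one_mul, hLB, Matrix.mul_assoc, PencilAux.mul_inclM, PencilAux.projM_mul, hBblk]
        exact (corner B' B12 B21 B22).symm
      · ext i j; exact hIempty.elim i
      · ext i j; exact hIempty.elim i
      · show Function.Injective (1 : Matrix (Fin m') (Fin m') k).mulVecLin
        rw [Matrix.mulVecLin_one]; exact fun a b h => h
      · exact PencilAux.inclM_injective heninl
      · intro y; exact ⟨0, funext fun i => hIempty.elim i⟩
      · exact PencilAux.projM_surjective hρinj
      · show LinearMap.range (1 : Matrix (Fin m') (Fin m') k).mulVecLin
          = LinearMap.ker (0 : Matrix (Fin (KRep.dsumList (List.replicate (n - n') (KRep.Inj k 0)) : KRep k).d1) (Fin m') k).mulVecLin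
        rw [Matrix.mulVecLin_one, Matrix.mulVecLin_zero, LinearMap.ker_zero, LinearMap.range_id]
      · refine PencilAux.range_inclM_eq_ker_projM heninl ?_ ?_
        · intro i j h
          rw [hρ] at h
          simpa using en.injective h
        · intro x
          rcases h : en.symm x with j | t
          · refine Or.inl ⟨j, ?_⟩
            show en (Sum.inl j) = x
            rw [← h]; exact en.apply_symm_apply x
          · refine Or.inr ⟨Fin.cast hI2.symm t, ?_⟩
            show en (Sum.inr (Fin.cast hI2 (Fin.cast hI2.symm t))) = x
            have hc : Fin.cast hI2 (Fin.cast hI2.symm t) = t := by ext; simp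
            rw [hc, ← h]; exact en.apply_symm_apply x
    · -- second SES
      set σ : Fin (KRep.dsumList (List.replicate (m - m') (KRep.P k 0)) : KRep k).d1 → Fin m :=
        fun i => em (Sum.inr (Fin.cast hP1 i)) with hσdef
      have hσinj : Function.Injective σ := by
        intro x y h
        have := em.injective h
        simpa [Fin.ext_iff] using this
      refine ⟨⟨(↑P : Matrix (Fin m) (Fin m) k) * PencilAux.inclM (k := k) σ,
          (0 : Matrix (Fin n) (Fin (KRep.dsumList (List.replicate (m - m') (KRep.P k 0)) : KRep k).d2) k), ?_, ?_⟩,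
        ⟨PencilAux.projM (k := k) (⇑em ∘ Sum.inl) * (↑(P⁻¹) : Matrix (Fin m) (Fin m) k),
          (↑Q : Matrix (Fin n) (Fin n) k), ?_, ?_⟩, ⟨?_, ?_⟩, ⟨?_, ?_⟩, ?_, ?_⟩
      · ext i j; exact hPempty.elim j
      · ext i j; exact hPempty.elim j
      · have hg : PencilAux.projM (k := k) (⇑em ∘ Sum.inl) * (↑(P⁻¹) : Matrix (Fin m) (Fin m) k) * A
            = LA * (↑Q : Matrix (Fin n) (Fin n) k) := by
          rw [hLA, ← hA]
          simp only [Matrix.mul_assoc]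
          rw [PencilAux.unit_inv_mul_cancel_left]
        exact hg
      · have hg : PencilAux.projM (k := k) (⇑em ∘ Sum.inl) * (↑(P⁻¹) : Matrix (Fin m) (Fin m) k) * B
            = LB * (↑Q : Matrix (Fin n) (Fin n) k) := by
          rw [hLB, ← hB]
          simp only [Matrix.mul_assoc]
          rw [PencilAux.unit_inv_mul_cancel_left]
        exact hg
      · show Function.Injective ((↑P : Matrix (Fin m) (Fin m) k) * PencilAux.inclM (k := k) σ).mulVecLin
        rw [Matrix.mulVecLin_mul]
        simp only [LinearMap.coe_comp]
        exact (PencilAux.unit_bij P).injective.comp (PencilAux.inclM_injective hσinj)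
      · intro x y _
        funext j
        exact hPempty.elim j
      · show Function.Surjective
          (PencilAux.projM (k := k) (⇑em ∘ Sum.inl) * (↑(P⁻¹) : Matrix (Fin m) (Fin m) k)).mulVecLin
        rw [Matrix.mulVecLin_mul]
        simp only [LinearMap.coe_comp]
        exact (PencilAux.projM_surjective heminl).comp (PencilAux.unit_bij P⁻¹).surjective
      · exact (PencilAux.unit_bij Q).surjective
      · show LinearMap.range ((↑P : Matrix (Fin m) (Fin m) k) * PencilAux.inclM (k := k) σ).mulVecLin
          = LinearMap.ker (PencilAux.projM (k := k) (⇑em ∘ Sum.inl) * (↑(P⁻¹) : Matrix (Fin m) (Fin m) k)).mulVecLin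
        rw [Matrix.mulVecLin_mul, Matrix.mulVecLin_mul, LinearMap.range_comp, LinearMap.ker_comp]
        have hcore : LinearMap.range (PencilAux.inclM (k := k) σ).mulVecLin
            = LinearMap.ker (PencilAux.projM (k := k) (⇑em ∘ Sum.inl)).mulVecLin := by
          refine PencilAux.range_inclM_eq_ker_projM hσinj ?_ ?_
          · intro i j h
            rw [hσdef] at h
            simpa using em.injective h
          · intro x
            rcases h : em.symm x with j | t
            · refine Or.inr ⟨j, ?_⟩
              show em (Sum.inl j) = x
              rw [← h, Equiv.apply_symm_apply]
            · refine Or.inl ⟨Fin.cast hP1.symm t, ?_⟩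
              show em (Sum.inr (Fin.cast hP1 (Fin.cast hP1.symm t))) = x
              have hc : Fin.cast hP1 (Fin.cast hP1.symm t) = t := by ext; simp
              rw [hc, ← h, Equiv.apply_symm_apply]
        rw [hcore]
        ext v
        simp only [Submodule.mem_map, Submodule.mem_comap]
        constructor
        · rintro ⟨w, hw, rfl⟩
          have hcanc : (↑(P⁻¹) : Matrix (Fin m) (Fin m) k).mulVecLin
              ((↑P : Matrix (Fin m) (Fin m) k).mulVecLin w) = w := by
            simp only [Matrix.mulVecLin_apply]
            exact PencilAux.unit_inv_mulVec_cancel P w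
          rw [hcanc]
          exact hw
        · intro hv
          refine ⟨(↑(P⁻¹) : Matrix (Fin m) (Fin m) k).mulVecLin v, hv, ?_⟩
          simp only [Matrix.mulVecLin_apply]
          exact PencilAux.unit_mulVec_inv_cancel P v
      · show LinearMap.range
            (0 : Matrix (Fin n) (Fin (KRep.dsumList (List.replicate (m - m') (KRep.P k 0)) : KRep k).d2) k).mulVecLin
          = LinearMap.ker ((↑Q : Matrix (Fin n) (Fin n) k)).mulVecLin
        rw [Matrix.mulVecLin_zero, LinearMap.range_zero,
          LinearMap.ker_eq_bot.mpr (PencilAux.unit_bij Q).injective]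
  · rintro ⟨hm', hn', L, ⟨f, g, fmono, gepi, hx1, hx2⟩, ⟨p, q, pmono, qepi, hx3, hx4⟩⟩
    have hm : m = m' + (m - m') := by omega
    have hn : n = n' + (n - n') := by omega
    set em : Fin m' ⊕ Fin (m - m') ≃ Fin m := finSumFinEquiv.trans (finCongr hm.symm) with hemdef
    set en : Fin n' ⊕ Fin (n - n') ≃ Fin n := finSumFinEquiv.trans (finCongr hn.symm) with hendef
    have hI2 : (KRep.dsumList (List.replicate (n - n') (KRep.Inj k 0)) : KRep k).d2 = n - n' :=
      PencilAux.inj0_d2 _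
    have hP1 : (KRep.dsumList (List.replicate (m - m') (KRep.P k 0)) : KRep k).d1 = m - m' :=
      PencilAux.p0_d1 _
    have hP2 : (KRep.dsumList (List.replicate (m - m') (KRep.P k 0)) : KRep k).d2 = 0 :=
      PencilAux.p0_d2 _
    have hPempty : IsEmpty (Fin (KRep.dsumList (List.replicate (m - m') (KRep.P k 0)) : KRep k).d2) := by
      rw [hP2]; infer_instance
    -- re-type the components of the morphisms
    obtain ⟨q1, hq1e⟩ : ∃ X : Matrix (Fin L.d1) (Fin m) k, X = q.f1 := ⟨q.f1, rfl⟩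
    obtain ⟨q2, hq2e⟩ : ∃ X : Matrix (Fin L.d2) (Fin n) k, X = q.f2 := ⟨q.f2, rfl⟩
    obtain ⟨p1, hp1e⟩ : ∃ X : Matrix (Fin m)
      (Fin (KRep.dsumList (List.replicate (m - m') (KRep.P k 0)) : KRep k).d1) k, X = p.f1 := ⟨p.f1, rfl⟩
    obtain ⟨p2, hp2e⟩ : ∃ X : Matrix (Fin n)
      (Fin (KRep.dsumList (List.replicate (m - m') (KRep.P k 0)) : KRep k).d2) k, X = p.f2 := ⟨p.f2, rfl⟩
    obtain ⟨f1, hf1e⟩ : ∃ X : Matrix (Fin L.d1) (Fin m') k, X = f.f1 := ⟨f.f1, rfl⟩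
    obtain ⟨f2, hf2e⟩ : ∃ X : Matrix (Fin L.d2) (Fin n') k, X = f.f2 := ⟨f.f2, rfl⟩
    have hq1surj : Function.Surjective q1.mulVecLin := by rw [hq1e]; exact qepi.1
    have hq2surj : Function.Surjective q2.mulVecLin := by rw [hq2e]; exact qepi.2
    have hp1inj : Function.Injective p1.mulVecLin := by rw [hp1e]; exact pmono.1
    have hf1inj : Function.Injective f1.mulVecLin := by rw [hf1e]; exact fmono.1
    have hf2inj : Function.Injective f2.mulVecLin := by rw [hf2e]; exact fmono.2
    have hqca : q1 * A = L.A * q2 := by rw [hq1e, hq2e]; exact q.comm_a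
    have hqcb : q1 * B = L.B * q2 := by rw [hq1e, hq2e]; exact q.comm_b
    have hfca : f1 * A' = L.A * f2 := by rw [hf1e, hf2e]; exact f.comm_a
    have hfcb : f1 * B' = L.B * f2 := by rw [hf1e, hf2e]; exact f.comm_b
    have hx3' : LinearMap.range p1.mulVecLin = LinearMap.ker q1.mulVecLin := by
      rw [hp1e, hq1e]; exact hx3
    have hx4' : LinearMap.range p2.mulVecLin = LinearMap.ker q2.mulVecLin := by
      rw [hp2e, hq2e]; exact hx4
    have hx2' : LinearMap.range f2.mulVecLin = LinearMap.ker g.f2.mulVecLin := by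
      rw [hf2e]; exact hx2
    -- q2 is bijective
    have hrange : LinearMap.range p2.mulVecLin = ⊥ := by
      rw [Submodule.eq_bot_iff]
      rintro x ⟨v, rfl⟩
      have hv : v = 0 := funext fun j => hPempty.elim j
      rw [hv, map_zero]
    have hq2inj : Function.Injective q2.mulVecLin :=
      LinearMap.ker_eq_bot.mp (by rw [← hx4', hrange])
    have hq2bij : Function.Bijective q2.mulVecLin := ⟨hq2inj, hq2surj⟩
    have hL2 : L.d2 = n := by
      have h := (LinearEquiv.ofBijective q2.mulVecLin hq2bij).finrank_eq
      rw [Module.finrank_fin_fun, Module.finrank_fin_fun] at h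
      exact h.symm
    have hgf0 : g.f2 * f2 = 0 := PencilAux.mul_eq_zero_of_range_le_ker (le_of_eq hx2')
    have hqp0 : q1 * p1 = 0 := PencilAux.mul_eq_zero_of_range_le_ker (le_of_eq hx3')
    -- construct Pm
    set ε1 : Fin (KRep.dsumList (List.replicate (m - m') (KRep.P k 0)) : KRep k).d1 ⊕ Fin m' ≃ Fin m :=
      (Equiv.sumCongr (finCongr hP1) (Equiv.refl (Fin m'))).trans
        ((Equiv.sumComm (Fin (m - m')) (Fin m')).trans em) with hε1
    obtain ⟨Pm, hPu, hqP0, -⟩ := PencilAux.exists_unit ε1 q1 p1 f1 hq1surj hp1inj hf1inj hqp0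
    have hfun1 : ⇑ε1 ∘ Sum.inr = ⇑em ∘ Sum.inl := by
      funext i
      simp [hε1]
    rw [hfun1] at hqP0
    -- construct Fm
    set ε2 : Fin n' ⊕ Fin (KRep.dsumList (List.replicate (n - n') (KRep.Inj k 0)) : KRep k).d2 ≃ Fin L.d2 :=
      (Equiv.sumCongr (Equiv.refl (Fin n')) (finCongr hI2)).trans
        (en.trans (finCongr hL2.symm)) with hε2
    obtain ⟨Fm, hFu, -, hFincl⟩ := PencilAux.exists_unit ε2 g.f2 f2 1 gepi.2 hf2inj
      (by rw [Matrix.mulVecLin_one]; exact fun a b h => h) hgf0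
    -- cast matrices
    set Cst : Matrix (Fin L.d2) (Fin n) k := PencilAux.inclM (Fin.cast hL2.symm) with hCstdef
    set Cst2 : Matrix (Fin n) (Fin L.d2) k := PencilAux.inclM (Fin.cast hL2) with hCst2def
    have hCC2 : Cst * Cst2 = 1 := by
      rw [hCstdef, hCst2def, PencilAux.mul_inclM]
      ext i j
      by_cases hij : (i : ℕ) = (j : ℕ)
      · simp [PencilAux.inclM, Matrix.submatrix_apply, Matrix.one_apply, Fin.ext_iff, hij]
      · simp [PencilAux.inclM, Matrix.submatrix_apply, Matrix.one_apply, Fin.ext_iff, hij]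
    have hCC : Cst2 * Cst = 1 := by
      rw [hCstdef, hCst2def, PencilAux.mul_inclM]
      ext i j
      by_cases hij : (i : ℕ) = (j : ℕ)
      · simp [PencilAux.inclM, Matrix.submatrix_apply, Matrix.one_apply, Fin.ext_iff, hij]
      · simp [PencilAux.inclM, Matrix.submatrix_apply, Matrix.one_apply, Fin.ext_iff, hij]
    -- Rm
    have hq2' : Function.Bijective (Cst2 * q2).mulVecLin := by
      rw [Matrix.mulVecLin_mul]
      simp only [LinearMap.coe_comp]
      exact (PencilAux.bij_of_mul_eq_one hCC hCC2).comp hq2bij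
    have hqu : IsUnit (Cst2 * q2) := PencilAux.isUnit_of_injective hq2'.injective
    set qu : (Matrix (Fin n) (Fin n) k)ˣ := hqu.unit with hqudef
    have hquv : (↑qu : Matrix (Fin n) (Fin n) k) = Cst2 * q2 := hqu.unit_spec
    set Rm : Matrix (Fin n) (Fin n) k :=
      (↑(qu⁻¹) : Matrix (Fin n) (Fin n) k) * (Cst2 * (Fm * Cst)) with hRmdef
    have hqf2' : q2 = Cst * (↑qu : Matrix (Fin n) (Fin n) k) := by
      rw [hquv, ← Matrix.mul_assoc, hCC2, Matrix.one_mul]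
    have hqR : q2 * Rm = Fm * Cst := by
      rw [hRmdef]
      conv_lhs => rw [hqf2']
      rw [Matrix.mul_assoc Cst, PencilAux.unit_mul_inv_cancel_left qu (Cst2 * (Fm * Cst)),
        ← Matrix.mul_assoc, hCC2, Matrix.one_mul]
    have hFmbij : Function.Bijective Fm.mulVecLin := by
      rw [← hFu.unit_spec]
      exact PencilAux.unit_bij hFu.unit
    have hRmbij : Function.Bijective Rm.mulVecLin := by
      rw [hRmdef, Matrix.mulVecLin_mul, Matrix.mulVecLin_mul, Matrix.mulVecLin_mul]
      simp only [LinearMap.coe_comp]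
      exact (PencilAux.unit_bij qu⁻¹).comp ((PencilAux.bij_of_mul_eq_one hCC hCC2).comp
        (hFmbij.comp (PencilAux.bij_of_mul_eq_one hCC2 hCC)))
    have hRu : IsUnit Rm := PencilAux.isUnit_of_injective hRmbij.injective
    set Ru : (Matrix (Fin n) (Fin n) k)ˣ := hRu.unit with hRudef
    have hRuv : (↑Ru : Matrix (Fin n) (Fin n) k) = Rm := hRu.unit_spec
    set Pu : (Matrix (Fin m) (Fin m) k)ˣ := hPu.unit with hPudef
    have hPuv : (↑Pu : Matrix (Fin m) (Fin m) k) = Pm := hPu.unit_spec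
    -- key identity
    have hq1fact : q1 = f1 * PencilAux.projM (k := k) (⇑em ∘ Sum.inl) * (↑(Pu⁻¹) : Matrix (Fin m) (Fin m) k) := by
      rw [← hqP0, ← hPuv, PencilAux.unit_mul_inv_cancel_right]
    have hεinl : Cst * PencilAux.inclM (k := k) (⇑en ∘ Sum.inl) = PencilAux.inclM (k := k) (⇑ε2 ∘ Sum.inl) := by
      rw [hCstdef, PencilAux.mul_inclM]
      ext i j
      have hj : ε2 (Sum.inl j) = Fin.cast hL2.symm (en (Sum.inl j)) := by
        simp [hε2]
      simp [PencilAux.inclM, Matrix.submatrix_apply, hj]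
    have key : ∀ (X : Matrix (Fin m) (Fin n) k) (X' : Matrix (Fin m') (Fin n') k)
        (LX : Matrix (Fin L.d1) (Fin L.d2) k),
        q1 * X = LX * q2 → f1 * X' = LX * f2 →
        PencilAux.projM (k := k) (⇑em ∘ Sum.inl) *
          ((↑(Pu⁻¹) : Matrix (Fin m) (Fin m) k) * ((X * (Rm * PencilAux.inclM (k := k) (⇑en ∘ Sum.inl)) : Matrix (Fin m) (Fin n') k))) = X' := by
      intro X X' LX hcq hcf
      apply PencilAux.mul_left_cancel_of_inj hf1inj
      calc f1 * (PencilAux.projM (k := k) (⇑em ∘ Sum.inl) *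
              ((↑(Pu⁻¹) : Matrix (Fin m) (Fin m) k) * ((X * (Rm * PencilAux.inclM (k := k) (⇑en ∘ Sum.inl)) : Matrix (Fin m) (Fin n') k))))
          = ((f1 * PencilAux.projM (k := k) (⇑em ∘ Sum.inl) * (↑(Pu⁻¹) : Matrix (Fin m) (Fin m) k)
                : Matrix (Fin L.d1) (Fin m) k)) *
              ((X * (Rm * PencilAux.inclM (k := k) (⇑en ∘ Sum.inl)) : Matrix (Fin m) (Fin n') k)) := by
            simp only [Matrix.mul_assoc]
        _ = q1 * ((X * (Rm * PencilAux.inclM (k := k) (⇑en ∘ Sum.inl)) : Matrix (Fin m) (Fin n') k)) := by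
            rw [← hq1fact]
        _ = ((q1 * X : Matrix (Fin L.d1) (Fin n) k)) * (Rm * PencilAux.inclM (k := k) (⇑en ∘ Sum.inl)) := by
            simp only [Matrix.mul_assoc]
        _ = ((LX * q2 : Matrix (Fin L.d1) (Fin n) k)) * (Rm * PencilAux.inclM (k := k) (⇑en ∘ Sum.inl)) := by
            rw [hcq]
        _ = LX * (((q2 * Rm : Matrix (Fin L.d2) (Fin n) k)) * PencilAux.inclM (k := k) (⇑en ∘ Sum.inl)
              : Matrix (Fin L.d2) (Fin n') k) := by
            simp only [Matrix.mul_assoc]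
        _ = LX * (((Fm * Cst : Matrix (Fin L.d2) (Fin n) k)) * PencilAux.inclM (k := k) (⇑en ∘ Sum.inl)
              : Matrix (Fin L.d2) (Fin n') k) := by rw [hqR]
        _ = LX * ((Fm * ((Cst * PencilAux.inclM (k := k) (⇑en ∘ Sum.inl) : Matrix (Fin L.d2) (Fin n') k))
              : Matrix (Fin L.d2) (Fin n') k)) := by
            simp only [Matrix.mul_assoc]
        _ = LX * ((Fm * PencilAux.inclM (k := k) (⇑ε2 ∘ Sum.inl) : Matrix (Fin L.d2) (Fin n') k)) := by
            rw [hεinl]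
        _ = LX * f2 := by rw [hFincl]
        _ = f1 * X' := hcf.symm
    have keyA := key A A' L.A hqca hfca
    have keyB := key B B' L.B hqcb hfcb
    -- rewrite as submatrix
    have hsub : ∀ (X : Matrix (Fin m) (Fin n) k),
        PencilAux.projM (k := k) (⇑em ∘ Sum.inl) *
          ((↑(Pu⁻¹) : Matrix (Fin m) (Fin m) k) * ((X * (Rm * PencilAux.inclM (k := k) (⇑en ∘ Sum.inl)) : Matrix (Fin m) (Fin n') k)))
        = ((↑(Pu⁻¹) : Matrix (Fin m) (Fin m) k) * (X * Rm)).submatrix (⇑em ∘ Sum.inl) (⇑en ∘ Sum.inl) := by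
      intro X
      rw [PencilAux.mul_inclM, PencilAux.mul_submatrix_id, PencilAux.mul_submatrix_id,
        PencilAux.projM_mul, Matrix.submatrix_submatrix]
      simp [Function.comp_def]
    rw [hsub A] at keyA
    rw [hsub B] at keyB
    set Zm : Matrix (Fin m) (Fin n) k := (↑(Pu⁻¹) : Matrix (Fin m) (Fin m) k) * (A * Rm) with hZmdef
    set ZmB : Matrix (Fin m) (Fin n) k := (↑(Pu⁻¹) : Matrix (Fin m) (Fin m) k) * (B * Rm) with hZmBdef
    refine ⟨m - m', n - n', hm, hn,
      Matrix.of (fun i j => Zm (em (Sum.inl i)) (en (Sum.inr j))),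
      Matrix.of (fun i j => ZmB (em (Sum.inl i)) (en (Sum.inr j))),
      Matrix.of (fun i j => Zm (em (Sum.inr i)) (en (Sum.inl j))),
      Matrix.of (fun i j => ZmB (em (Sum.inr i)) (en (Sum.inl j))),
      Matrix.of (fun i j => Zm (em (Sum.inr i)) (en (Sum.inr j))),
      Matrix.of (fun i j => ZmB (em (Sum.inr i)) (en (Sum.inr j))),
      Pu, Ru⁻¹, ?_, ?_⟩
    · have hblocks : Matrix.reindex em en (Matrix.fromBlocks A'
          (Matrix.of (fun i j => Zm (em (Sum.inl i)) (en (Sum.inr j))))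
          (Matrix.of (fun i j => Zm (em (Sum.inr i)) (en (Sum.inl j))))
          (Matrix.of (fun i j => Zm (em (Sum.inr i)) (en (Sum.inr j))))) = Zm := by
        ext r c
        rw [Matrix.reindex_apply, Matrix.submatrix_apply]
        have hr' : em (em.symm r) = r := em.apply_symm_apply r
        have hc' : en (en.symm c) = c := en.apply_symm_apply c
        rcases hr : em.symm r with i | i <;> rcases hc : en.symm c with j | j <;>
          rw [hr] at hr' <;> rw [hc] at hc' <;> rw [← hr', ← hc']
        · rw [Matrix.fromBlocks_apply₁₁]
          have h := congrFun (congrFun keyA i) j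
          simpa [Matrix.submatrix_apply] using h.symm
        · rw [Matrix.fromBlocks_apply₁₂]; rfl
        · rw [Matrix.fromBlocks_apply₂₁]; rfl
        · rw [Matrix.fromBlocks_apply₂₂]; rfl
      rw [hblocks, hZmdef, ← hRuv, PencilAux.unit_mul_inv_cancel_left Pu,
        PencilAux.unit_mul_inv_cancel_right]
    · have hblocks : Matrix.reindex em en (Matrix.fromBlocks B'
          (Matrix.of (fun i j => ZmB (em (Sum.inl i)) (en (Sum.inr j))))
          (Matrix.of (fun i j => ZmB (em (Sum.inr i)) (en (Sum.inl j))))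
          (Matrix.of (fun i j => ZmB (em (Sum.inr i)) (en (Sum.inr j))))) = ZmB := by
        ext r c
        rw [Matrix.reindex_apply, Matrix.submatrix_apply]
        have hr' : em (em.symm r) = r := em.apply_symm_apply r
        have hc' : en (en.symm c) = c := en.apply_symm_apply c
        rcases hr : em.symm r with i | i <;> rcases hc : en.symm c with j | j <;>
          rw [hr] at hr' <;> rw [hc] at hc' <;> rw [← hr', ← hc']
        · rw [Matrix.fromBlocks_apply₁₁]
          have h := congrFun (congrFun keyB i) j
          simpa [Matrix.submatrix_apply] using h.symm
        · rw [Matrix.fromBlocks_apply₁₂]; rfl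
        · rw [Matrix.fromBlocks_apply₂₁]; rfl
        · rw [Matrix.fromBlocks_apply₂₂]; rfl
      rw [hblocks, hZmBdef, ← hRuv, PencilAux.unit_mul_inv_cancel_left Pu,
        PencilAux.unit_mul_inv_cancel_right]
end

section
/- Let aₙ, …, a₀ and cₙ, …, c₀ be non-negative integers, and define bₙ, …, b₂ recursively by bₙ = min(aₙ, cₙ) and, for 2 ≤ t < n, b_t = ⌊min( (Σ_{i=t}^{n} i·aᵢ − Σ_{i=t+1}^{n} i·bᵢ)/t , (Σ_{i=t}^{n} (i+1)·cᵢ − Σ_{i=t+1}^{n} (i+1)·bᵢ)/(t+1) )⌋. Then b_t ≥ 0 for all t with 2 ≤ t ≤ n, and moreover Σ_{i=t}^{n} i·aᵢ − Σ_{i=t+1}^{n} i·bᵢ ≥ t·b_t ≥ 0 and Σ_{i=t}^{n} (i+1)·cᵢ − Σ_{i=t+1}^{n} (i+1)·bᵢ ≥ (t+1)·b_t ≥ 0 for each such t. -/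
open Matrix Finset

variable {k : Type} [Field k]

/-- Auxiliary recursion computing the greedy sequence `b_n, b_{n-1}, …` of the
linking-module multiplicities: `bA a c n k j` is `b_{n-j}`, computed after `k`
steps of the descending recursion (for `j ≤ k`). -/
def bA (a c : ℕ → ℕ) (n : ℕ) : ℕ → ℕ → ℤ
  | 0, _ => min (a n : ℤ) (c n : ℤ)
  | (K + 1), j =>
      if j ≤ K then bA a c n K j
      else
        min
          (Int.fdiv ((∑ i ∈ Finset.Icc (n - (K + 1)) n, (i : ℤ) * a i) -
              ∑ jj ∈ Finset.range (K + 1), ((n : ℤ) - jj) * bA a c n K jj)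
            ((n : ℤ) - (K + 1)))
          (Int.fdiv ((∑ i ∈ Finset.Icc (n - (K + 1)) n, ((i : ℤ) + 1) * c i) -
              ∑ jj ∈ Finset.range (K + 1), ((n : ℤ) - jj + 1) * bA a c n K jj)
            ((n : ℤ) - (K + 1) + 1))

/-- `bfun a c n t = b_t` for `2 ≤ t ≤ n`:  `b_n = min(a_n, c_n)` and
`b_t = ⌊min((Σ_{i=t}^n i·aᵢ − Σ_{i=t+1}^n i·bᵢ)/t,
(Σ_{i=t}^n (i+1)·cᵢ − Σ_{i=t+1}^n (i+1)·bᵢ)/(t+1))⌋`. -/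
def bfun (a c : ℕ → ℕ) (n t : ℕ) : ℤ := bA a c n (n - t) (n - t)

lemma bA_stable (a c : ℕ → ℕ) (n : ℕ) :
    ∀ K j, j ≤ K → bA a c n K j = bA a c n j j := by
  intro K
  induction K with
  | zero =>
      intro j hj
      obtain rfl : j = 0 := Nat.le_zero.mp hj
      rfl
  | succ K ih =>
      intro j hj
      rcases Nat.lt_or_ge j (K + 1) with h | h
      · rw [show bA a c n (K+1) j = bA a c n K j by
          simp [bA, Nat.lt_succ_iff.mp h]]
        exact ih j (Nat.lt_succ_iff.mp h)
      · have : j = K + 1 := le_antisymm hj h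
        subst this; rfl

lemma bfun_eq (a c : ℕ → ℕ) (n t : ℕ) (ht : t < n) :
    bfun a c n t =
      min (Int.fdiv ((∑ i ∈ Icc t n, (i : ℤ) * a i) -
            ∑ i ∈ Icc (t + 1) n, (i : ℤ) * bfun a c n i) (t : ℤ))
        (Int.fdiv ((∑ i ∈ Icc t n, ((i : ℤ) + 1) * c i) -
            ∑ i ∈ Icc (t + 1) n, ((i : ℤ) + 1) * bfun a c n i) ((t : ℤ) + 1)) := by
  obtain ⟨K, hK⟩ : ∃ K, n - t = K + 1 := ⟨n - t - 1, by omega⟩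
  have hnt : n - (K + 1) = t := by omega
  have hntz : (n : ℤ) - (K + 1) = t := by omega
  have key : ∀ g : ℤ → ℤ → ℤ,
      ∑ jj ∈ Finset.range (K + 1), g ((n : ℤ) - jj) (bA a c n K jj)
        = ∑ i ∈ Icc (t + 1) n, g (i : ℤ) (bfun a c n i) := by
    intro g
    apply Finset.sum_nbij' (fun jj => n - jj) (fun i => n - i)
    · intro jj hjj
      simp only [Finset.mem_range] at hjj
      simp only [Finset.mem_Icc]; omega
    · intro i hi
      simp only [Finset.mem_Icc] at hi
      simp only [Finset.mem_range]; omega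
    · intro jj hjj
      simp only [Finset.mem_range] at hjj; omega
    · intro i hi
      simp only [Finset.mem_Icc] at hi; omega
    · intro jj hjj
      simp only [Finset.mem_range] at hjj
      have h1 : ((n - jj : ℕ) : ℤ) = (n : ℤ) - jj := by push_cast [Nat.le_of_lt (by omega : jj < n)]; ring
      have h2 : bfun a c n (n - jj) = bA a c n K jj := by
        unfold bfun
        rw [show n - (n - jj) = jj by omega]
        exact (bA_stable a c n K jj (by omega)).symm
      rw [h1, h2]
  have e1 := key (fun x y => x * y)
  have e2 := key (fun x y => (x + 1) * y)
  unfold bfun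
  rw [hK]
  simp only [bA, Nat.lt_irrefl, if_neg (by omega : ¬ K + 1 ≤ K)]
  rw [hnt, e1, e2, hntz]
  rfl

lemma sum_Icc_split (f : ℕ → ℤ) (t n : ℕ) (h : t ≤ n) :
    ∑ i ∈ Icc t n, f i = f t + ∑ i ∈ Icc (t + 1) n, f i := by
  have he : Icc t n = insert t (Icc (t + 1) n) := by
    ext x; simp only [Finset.mem_Icc, Finset.mem_insert]; omega
  rw [he, Finset.sum_insert (by simp only [Finset.mem_Icc]; omega)]

lemma fdiv_mul_le (x d : ℤ) (hd : 0 < d) : d * x.fdiv d ≤ x := by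
  rw [Int.fdiv_eq_ediv_of_nonneg x hd.le, mul_comm]
  exact Int.ediv_mul_le x hd.ne'

/-- Non-negativity of the greedy recursion: for all `2 ≤ t ≤ n` one has
`b_t ≥ 0`, `Σ_{i=t}^n i·aᵢ − Σ_{i=t+1}^n i·bᵢ ≥ t·b_t ≥ 0` and
`Σ_{i=t}^n (i+1)·cᵢ − Σ_{i=t+1}^n (i+1)·bᵢ ≥ (t+1)·b_t ≥ 0`. -/
theorem brec_nonneg (a c : ℕ → ℕ) (n : ℕ) :
    ∀ t, 2 ≤ t → t ≤ n →
      0 ≤ bfun a c n t ∧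
      (t : ℤ) * bfun a c n t ≤
        (∑ i ∈ Finset.Icc t n, (i : ℤ) * a i) -
          ∑ i ∈ Finset.Icc (t + 1) n, (i : ℤ) * bfun a c n i ∧
      0 ≤ (t : ℤ) * bfun a c n t ∧
      ((t : ℤ) + 1) * bfun a c n t ≤
        (∑ i ∈ Finset.Icc t n, ((i : ℤ) + 1) * c i) -
          ∑ i ∈ Finset.Icc (t + 1) n, ((i : ℤ) + 1) * bfun a c n i ∧
      0 ≤ ((t : ℤ) + 1) * bfun a c n t := by
  have base : ∀ t, 2 ≤ t → t = n →
      0 ≤ bfun a c n t ∧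
      (t : ℤ) * bfun a c n t ≤
        (∑ i ∈ Finset.Icc t n, (i : ℤ) * a i) -
          ∑ i ∈ Finset.Icc (t + 1) n, (i : ℤ) * bfun a c n i ∧
      ((t : ℤ) + 1) * bfun a c n t ≤
        (∑ i ∈ Finset.Icc t n, ((i : ℤ) + 1) * c i) -
          ∑ i ∈ Finset.Icc (t + 1) n, ((i : ℤ) + 1) * bfun a c n i := by
    intro t ht2 htn
    subst htn
    have hbn : bfun a c t t = min (a t : ℤ) (c t : ℤ) := by
      unfold bfun; rw [Nat.sub_self]; rfl
    rw [hbn, Finset.Icc_self, Finset.sum_singleton, Finset.sum_singleton,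
      Finset.Icc_eq_empty (by omega), Finset.sum_empty, Finset.sum_empty]
    refine ⟨le_min (Int.natCast_nonneg _) (Int.natCast_nonneg _), ?_, ?_⟩
    · calc (t : ℤ) * min (a t : ℤ) (c t : ℤ) ≤ (t : ℤ) * a t :=
            mul_le_mul_of_nonneg_left (min_le_left _ _) (Int.natCast_nonneg t)
        _ = (t : ℤ) * a t - 0 := by ring
    · calc ((t : ℤ) + 1) * min (a t : ℤ) (c t : ℤ) ≤ ((t : ℤ) + 1) * c t :=
            mul_le_mul_of_nonneg_left (min_le_right _ _) (by positivity)
        _ = ((t : ℤ) + 1) * c t - 0 := by ring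
  have main : ∀ d t, 2 ≤ t → t ≤ n → n - t ≤ d →
      0 ≤ bfun a c n t ∧
      (t : ℤ) * bfun a c n t ≤
        (∑ i ∈ Finset.Icc t n, (i : ℤ) * a i) -
          ∑ i ∈ Finset.Icc (t + 1) n, (i : ℤ) * bfun a c n i ∧
      ((t : ℤ) + 1) * bfun a c n t ≤
        (∑ i ∈ Finset.Icc t n, ((i : ℤ) + 1) * c i) -
          ∑ i ∈ Finset.Icc (t + 1) n, ((i : ℤ) + 1) * bfun a c n i := by
    intro d
    induction d with
    | zero =>
        intro t ht2 htn hd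
        exact base t ht2 (by omega)
    | succ d ih =>
        intro t ht2 htn hd
        rcases eq_or_lt_of_le htn with heq | hlt
        · exact base t ht2 heq
        · obtain ⟨hb1, ha1, hc1⟩ := ih (t + 1) (by omega) (by omega) (by omega)
          push_cast at ha1 hc1 hb1
          have sA := sum_Icc_split (fun i => (i : ℤ) * a i) t n htn
          have sB := sum_Icc_split (fun i => (i : ℤ) * bfun a c n i) (t + 1) n (by omega)
          have sC := sum_Icc_split (fun i => ((i : ℤ) + 1) * c i) t n htn
          have sD := sum_Icc_split (fun i => ((i : ℤ) + 1) * bfun a c n i) (t + 1) n (by omega)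
          push_cast at sA sB sC sD
          have hta : (0 : ℤ) ≤ (t : ℤ) * a t := by positivity
          have htc : (0 : ℤ) ≤ ((t : ℤ) + 1) * c t := by positivity
          have hSa : 0 ≤ (∑ i ∈ Finset.Icc t n, (i : ℤ) * a i) -
              ∑ i ∈ Finset.Icc (t + 1) n, (i : ℤ) * bfun a c n i := by
            rw [sA, sB]; linarith
          have hSc : 0 ≤ (∑ i ∈ Finset.Icc t n, ((i : ℤ) + 1) * c i) -
              ∑ i ∈ Finset.Icc (t + 1) n, ((i : ℤ) + 1) * bfun a c n i := by
            rw [sC, sD]; linarith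
          have htpos : (0 : ℤ) < (t : ℤ) := by exact_mod_cast (by omega : 0 < t)
          have htpos1 : (0 : ℤ) < (t : ℤ) + 1 := by linarith
          rw [bfun_eq a c n t hlt]
          refine ⟨le_min (Int.fdiv_nonneg hSa htpos.le) (Int.fdiv_nonneg hSc htpos1.le),
            ?_, ?_⟩
          · calc (t : ℤ) * min _ _ ≤ (t : ℤ) * Int.fdiv _ (t : ℤ) :=
                  mul_le_mul_of_nonneg_left (min_le_left _ _) htpos.le
              _ ≤ _ := fdiv_mul_le _ _ htpos
          · calc ((t : ℤ) + 1) * min _ _ ≤ ((t : ℤ) + 1) * Int.fdiv _ ((t : ℤ) + 1) :=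
                  mul_le_mul_of_nonneg_left (min_le_right _ _) htpos1.le
              _ ≤ _ := fdiv_mul_le _ _ htpos1
  intro t ht2 htn
  obtain ⟨h0, ha, hc⟩ := main (n - t) t ht2 htn le_rfl
  exact ⟨h0, ha, mul_nonneg (Int.natCast_nonneg t) h0, hc,
    mul_nonneg (by positivity) h0⟩
end
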